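/- arXiv:2306.04902 — 6 statements merged into one kernel-verified Lean document; each statement's English description precedes it below -/
import Mathlib

section
/- Let $K \geq 1$ and $x_1, \ldots, x_K \in [0,1]$ with not all $x_j$ equal to $1$. With $S_k = \binom{K}{k}^{-1} \sum_{|J|=k} \prod_{j \in J} x_j$, one has $\frac{\sum_{k=1}^{K} S_k}{\sum_{k=0}^{K-1} S_k} \leq S_1$. -/
open Finset

/-- Normalized elementary symmetric mean `S_k` of `x_1, ..., x_K` (`S_0 = 1`). -/
noncomputable def symMean (K : ℕ) (x : Fin K → ℝ) (k : ℕ) : ℝ :=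
  ((K.choose k : ℝ))⁻¹ * ∑ J ∈ Finset.powersetCard k (Finset.univ : Finset (Fin K)),
    ∏ j ∈ J, x j

/-- Elementary symmetric polynomial `e_k`. -/
noncomputable def eSym (K : ℕ) (x : Fin K → ℝ) (k : ℕ) : ℝ :=
  ∑ J ∈ Finset.powersetCard k (Finset.univ : Finset (Fin K)), ∏ j ∈ J, x j

lemma symMean_eq (K : ℕ) (x : Fin K → ℝ) (k : ℕ) :
    symMean K x k = ((K.choose k : ℝ))⁻¹ * eSym K x k := rfl

lemma eSym_nonneg {K : ℕ} {x : Fin K → ℝ} (hx : ∀ j, 0 ≤ x j) (k : ℕ) :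
    0 ≤ eSym K x k := by
  apply Finset.sum_nonneg
  intro J _
  exact Finset.prod_nonneg fun j _ => hx j

lemma symMean_nonneg {K : ℕ} {x : Fin K → ℝ} (hx : ∀ j, 0 ≤ x j) (k : ℕ) :
    0 ≤ symMean K x k :=
  mul_nonneg (by positivity) (eSym_nonneg hx k)

lemma symMean_zero (K : ℕ) (x : Fin K → ℝ) : symMean K x 0 = 1 := by
  simp [symMean]

/-- The key reindexing bijection: pairs `(I, j)` with `|I| = b+1`, `j ∈ I`
correspond to pairs `(B, j)` with `|B| = b`, `j ∉ B`, via `I = insert j B`. -/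
lemma reindex (K b : ℕ) (f : Finset (Fin K) → Fin K → ℝ) :
    ∑ I ∈ powersetCard (b+1) (univ : Finset (Fin K)), ∑ j ∈ I, f I j
      = ∑ B ∈ powersetCard b (univ : Finset (Fin K)), ∑ j ∈ Bᶜ, f (insert j B) j := by
  rw [Finset.sum_sigma' (powersetCard (b+1) (univ : Finset (Fin K))) (fun I => I)
    (fun I j => f I j),
    Finset.sum_sigma' (powersetCard b (univ : Finset (Fin K))) (fun B => Bᶜ)
    (fun B j => f (insert j B) j)]
  refine Finset.sum_nbij' (fun p => ⟨p.1.erase p.2, p.2⟩) (fun p => ⟨insert p.2 p.1, p.2⟩)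
    ?_ ?_ ?_ ?_ ?_
  · rintro ⟨I, j⟩ hp
    simp only [Finset.mem_sigma, Finset.mem_powersetCard_univ] at hp ⊢
    refine ⟨?_, ?_⟩
    · rw [Finset.card_erase_of_mem hp.2, hp.1]
      omega
    · simp

  · rintro ⟨B, j⟩ hp
    simp only [Finset.mem_sigma, Finset.mem_powersetCard_univ, Finset.mem_compl] at hp ⊢
    refine ⟨?_, Finset.mem_insert_self _ _⟩
    rw [Finset.card_insert_of_notMem hp.2, hp.1]
  · rintro ⟨I, j⟩ hp
    simp only [Finset.mem_sigma, Finset.mem_powersetCard_univ] at hp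
    simp [Finset.insert_erase hp.2]
  · rintro ⟨B, j⟩ hp
    simp only [Finset.mem_sigma, Finset.mem_powersetCard_univ, Finset.mem_compl] at hp
    simp [Finset.erase_insert hp.2]
  · rintro ⟨I, j⟩ hp
    simp only [Finset.mem_sigma, Finset.mem_powersetCard_univ] at hp
    simp [Finset.insert_erase hp.2]

/-- `(b+2) e_{b+2} = ∑_{|I|=b+1} (∏_I x) (∑_{m ∉ I} x_m)`. -/
lemma eSucc_eq (K b : ℕ) (x : Fin K → ℝ) :
    ((b:ℝ)+2) * eSym K x (b+2)
      = ∑ I ∈ powersetCard (b+1) (univ : Finset (Fin K)),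
          (∏ i ∈ I, x i) * (∑ m ∈ Iᶜ, x m) := by
  have h1 : ((b:ℝ)+2) * eSym K x (b+2)
      = ∑ J ∈ powersetCard (b+2) (univ : Finset (Fin K)), ∑ j ∈ J, ∏ i ∈ J, x i := by
    rw [eSym, Finset.mul_sum]
    refine Finset.sum_congr rfl fun J hJ => ?_
    rw [Finset.mem_powersetCard_univ] at hJ
    rw [Finset.sum_const, hJ]
    push_cast
    ring
  rw [h1, reindex K (b+1) (fun J _ => ∏ i ∈ J, x i)]
  refine Finset.sum_congr rfl fun I hI => ?_
  rw [Finset.mem_powersetCard_univ] at hI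
  rw [Finset.mul_sum]
  refine Finset.sum_congr rfl fun j hj => ?_
  rw [Finset.mem_compl] at hj
  rw [Finset.prod_insert hj]
  ring

/-- Main inequality at the level of `e_k`'s. -/
lemma main_ineq {K : ℕ} {x : Fin K → ℝ} (hx : ∀ j, 0 ≤ x j) (b : ℕ) (hb : b + 1 < K) :
    (K : ℝ) * (((b:ℝ)+2) * eSym K x (b+2))
      ≤ ((K : ℝ) - ((b:ℝ)+1)) * (eSym K x 1 * eSym K x (b+1)) := by
  set T : ℝ := ∑ I ∈ powersetCard (b+1) (univ : Finset (Fin K)),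
      (∏ i ∈ I, x i) * (∑ j ∈ I, x j) with hT
  set W : ℝ := ((b:ℝ)+2) * eSym K x (b+2) with hW
  -- e₁ = ∑ x j
  have he1 : eSym K x 1 = ∑ j, x j := by
    rw [eSym]
    rw [Finset.powersetCard_one]
    rw [Finset.sum_map]
    simp
  -- split: e₁ * e_{b+1} = T + W
  have hsplit : eSym K x 1 * eSym K x (b+1) = T + W := by
    rw [hT, hW, eSucc_eq, he1]
    rw [show eSym K x (b+1) = ∑ J ∈ powersetCard (b+1) (univ : Finset (Fin K)),
      ∏ j ∈ J, x j from rfl]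
    rw [Finset.mul_sum, ← Finset.sum_add_distrib]
    refine Finset.sum_congr rfl fun I _ => ?_
    rw [← mul_add, Finset.sum_add_sum_compl]
    ring
  -- T in B-coordinates
  have hT' : T = ∑ B ∈ powersetCard b (univ : Finset (Fin K)),
      (∏ i ∈ B, x i) * (∑ j ∈ Bᶜ, (x j)^2) := by
    have : T = ∑ I ∈ powersetCard (b+1) (univ : Finset (Fin K)),
        ∑ j ∈ I, (∏ i ∈ I, x i) * x j := by
      rw [hT]
      exact Finset.sum_congr rfl fun I _ => by rw [Finset.mul_sum]
    rw [this, reindex K b (fun I j => (∏ i ∈ I, x i) * x j)]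
    refine Finset.sum_congr rfl fun B _ => ?_
    rw [Finset.mul_sum]
    refine Finset.sum_congr rfl fun j hj => ?_
    rw [Finset.mem_compl] at hj
    rw [Finset.prod_insert hj]
    ring
  -- (b+1) * W in B-coordinates
  have hW' : ((b:ℝ)+1) * W = ∑ B ∈ powersetCard b (univ : Finset (Fin K)),
      (∏ i ∈ B, x i) * ((∑ j ∈ Bᶜ, x j)^2 - ∑ j ∈ Bᶜ, (x j)^2) := by
    rw [hW, eSucc_eq, Finset.mul_sum]
    have h2 : ∀ I ∈ powersetCard (b+1) (univ : Finset (Fin K)),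
        ((b:ℝ)+1) * ((∏ i ∈ I, x i) * (∑ m ∈ Iᶜ, x m))
          = ∑ j ∈ I, (∏ i ∈ I, x i) * (∑ m ∈ Iᶜ, x m) := by
      intro I hI
      rw [Finset.mem_powersetCard_univ] at hI
      rw [Finset.sum_const, hI]
      push_cast
      ring
    rw [Finset.sum_congr rfl h2,
      reindex K b (fun I j => (∏ i ∈ I, x i) * (∑ m ∈ Iᶜ, x m))]
    refine Finset.sum_congr rfl fun B hB => ?_
    have : ∀ j ∈ Bᶜ, (∏ i ∈ insert j B, x i) * (∑ m ∈ (insert j B)ᶜ, x m)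
        = (∏ i ∈ B, x i) * (x j * (∑ m ∈ Bᶜ, x m) - (x j)^2) := by
      intro j hj
      have hj' : j ∉ B := Finset.mem_compl.mp hj
      rw [Finset.compl_insert, Finset.sum_erase_eq_sub hj, Finset.prod_insert hj']
      ring
    rw [Finset.sum_congr rfl this, ← Finset.mul_sum]
    congr 1
    rw [Finset.sum_sub_distrib, ← Finset.sum_mul]
    ring
  -- per-B Cauchy–Schwarz: (b+1) W ≤ (K - b - 1) T
  have hkey : ((b:ℝ)+1) * W ≤ ((K:ℝ) - ((b:ℝ)+1)) * T := by
    rw [hW', hT', Finset.mul_sum]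
    refine Finset.sum_le_sum fun B hB => ?_
    rw [Finset.mem_powersetCard_univ] at hB
    have hcard : (Bᶜ.card : ℝ) = (K:ℝ) - b := by
      rw [Finset.card_compl, Fintype.card_fin]
      have : b ≤ K := le_of_lt (Nat.lt_of_succ_lt hb)
      rw [hB]
      push_cast [Nat.cast_sub this]
      ring
    have hcs : (∑ j ∈ Bᶜ, x j)^2 ≤ ((K:ℝ) - b) * ∑ j ∈ Bᶜ, (x j)^2 := by
      rw [← hcard]
      exact_mod_cast sq_sum_le_card_mul_sum_sq (s := Bᶜ) (f := x)
    have hprod : 0 ≤ ∏ i ∈ B, x i := Finset.prod_nonneg fun i _ => hx i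
    have hQ : 0 ≤ ∑ j ∈ Bᶜ, (x j)^2 := Finset.sum_nonneg fun j _ => sq_nonneg _
    nlinarith [mul_le_mul_of_nonneg_left hcs hprod]
  -- combine
  have hTnn : 0 ≤ T := by
    rw [hT']
    refine Finset.sum_nonneg fun B _ => mul_nonneg
      (Finset.prod_nonneg fun i _ => hx i)
      (Finset.sum_nonneg fun j _ => sq_nonneg _)
  have hWnn : 0 ≤ W := by
    rw [hW]
    exact mul_nonneg (by positivity) (eSym_nonneg hx _)
  rw [hsplit]
  have hKb : ((b:ℝ)+1) < (K:ℝ) := by exact_mod_cast hb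
  nlinarith [hkey, mul_nonneg (by linarith : (0:ℝ) ≤ (K:ℝ) - ((b:ℝ)+1)) hWnn]

/-- The step inequality `S_{k+1} ≤ S_1 S_k` for `k < K`. -/
lemma step {K : ℕ} {x : Fin K → ℝ} (hx : ∀ j, 0 ≤ x j) (k : ℕ) (hk : k < K) :
    symMean K x (k+1) ≤ symMean K x 1 * symMean K x k := by
  match k, hk with
  | 0, _ => rw [symMean_zero, mul_one]
  | (b+1), hk =>
    have hble : b + 1 ≤ K := le_of_lt hk
    have hble2 : b + 2 ≤ K := hk
    have hc2 : (0:ℝ) < (K.choose (b+2) : ℝ) := by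
      exact_mod_cast Nat.choose_pos hble2
    have hc1 : (0:ℝ) < (K.choose (b+1) : ℝ) := by
      exact_mod_cast Nat.choose_pos hble
    have hK0 : (0:ℝ) < (K:ℝ) := by
      have : 0 < K := by omega
      exact_mod_cast this
    have h1 : (K.choose 1 : ℝ) = (K:ℝ) := by rw [Nat.choose_one_right]
    have hid : (K.choose (b+2) : ℝ) * ((b:ℝ)+2)
        = (K.choose (b+1) : ℝ) * ((K:ℝ) - ((b:ℝ)+1)) := by
      have h := Nat.choose_succ_right_eq K (b+1)
      have h2 : ((K.choose (b+1+1) * (b+1+1) : ℕ) : ℝ)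
          = ((K.choose (b+1) * (K - (b+1)) : ℕ) : ℝ) := congrArg (fun n : ℕ => (n:ℝ)) h
      push_cast [Nat.cast_sub hble] at h2
      convert h2 using 2 <;> push_cast <;> ring
    have main := main_ineq hx b hk
    have step3 : (K.choose (b+1) : ℝ) * (K:ℝ) * eSym K x (b+2)
        ≤ (K.choose (b+2) : ℝ) * (eSym K x 1 * eSym K x (b+1)) := by
      have hb2 : (0:ℝ) < (b:ℝ)+2 := by positivity
      apply le_of_mul_le_mul_left _ hb2
      calc ((b:ℝ)+2) * ((K.choose (b+1) : ℝ) * (K:ℝ) * eSym K x (b+2))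
          = (K.choose (b+1) : ℝ) * ((K:ℝ) * (((b:ℝ)+2) * eSym K x (b+2))) := by ring
        _ ≤ (K.choose (b+1) : ℝ) * (((K:ℝ) - ((b:ℝ)+1)) * (eSym K x 1 * eSym K x (b+1))) :=
            mul_le_mul_of_nonneg_left main hc1.le
        _ = ((K.choose (b+1) : ℝ) * ((K:ℝ) - ((b:ℝ)+1))) * (eSym K x 1 * eSym K x (b+1)) := by
            ring
        _ = ((b:ℝ)+2) * ((K.choose (b+2) : ℝ) * (eSym K x 1 * eSym K x (b+1))) := by
            rw [← hid]; ring
    have goal' : eSym K x (b+2) / (K.choose (b+2) : ℝ)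
        ≤ (eSym K x 1 * eSym K x (b+1)) / ((K:ℝ) * (K.choose (b+1) : ℝ)) := by
      rw [div_le_div_iff₀ hc2 (by positivity)]
      calc eSym K x (b+2) * ((K:ℝ) * (K.choose (b+1) : ℝ))
          = (K.choose (b+1) : ℝ) * (K:ℝ) * eSym K x (b+2) := by ring
        _ ≤ (K.choose (b+2) : ℝ) * (eSym K x 1 * eSym K x (b+1)) := step3
        _ = eSym K x 1 * eSym K x (b+1) * (K.choose (b+2) : ℝ) := by ring
    rw [symMean_eq, symMean_eq, symMean_eq, h1, inv_mul_eq_div]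
    have hrw : ((K:ℝ))⁻¹ * eSym K x 1 * (((K.choose (b+1) : ℝ))⁻¹ * eSym K x (b+1))
        = (eSym K x 1 * eSym K x (b+1)) / ((K:ℝ) * (K.choose (b+1) : ℝ)) := by
      field_simp
    rw [hrw]
    exact goal'

/-- For `x_1, ..., x_K ∈ [0,1]`, not all equal to `1`, one has
`(∑_{k=1}^K S_k) / (∑_{k=0}^{K-1} S_k) ≤ S_1`. -/
theorem ratio_symMean_le (K : ℕ) (hK : 1 ≤ K) (x : Fin K → ℝ)
    (hx : ∀ j, x j ∈ Set.Icc (0 : ℝ) 1) (hne : ∃ j, x j ≠ 1) :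
    (∑ k ∈ Finset.Icc 1 K, symMean K x k) / (∑ k ∈ Finset.range K, symMean K x k)
      ≤ symMean K x 1 := by
  have hx0 : ∀ j, 0 ≤ x j := fun j => (hx j).1
  have hnum : ∑ k ∈ Finset.Icc 1 K, symMean K x k
      = ∑ i ∈ Finset.range K, symMean K x (i+1) := by
    refine Finset.sum_nbij' (fun k => k - 1) (fun i => i + 1) ?_ ?_ ?_ ?_ ?_
    · intro a ha
      rw [Finset.mem_Icc] at ha
      rw [Finset.mem_range]
      omega
    · intro a ha
      rw [Finset.mem_range] at ha
      rw [Finset.mem_Icc]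
      omega
    · intro a ha
      rw [Finset.mem_Icc] at ha
      omega
    · intro a _
      omega
    · intro a ha
      rw [Finset.mem_Icc] at ha
      congr 1
      omega
  have hden_pos : 0 < ∑ k ∈ Finset.range K, symMean K x k := by
    have h0 : (1:ℝ) ≤ ∑ k ∈ Finset.range K, symMean K x k := by
      calc (1:ℝ) = symMean K x 0 := (symMean_zero K x).symm
        _ ≤ ∑ k ∈ Finset.range K, symMean K x k :=
          Finset.single_le_sum (fun i _ => symMean_nonneg hx0 i)
            (Finset.mem_range.mpr hK)
    linarith
  rw [div_le_iff₀ hden_pos, hnum, Finset.mul_sum]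
  refine Finset.sum_le_sum fun i hi => ?_
  exact step hx0 i (Finset.mem_range.mp hi)
end

section
/- Let $K \geq 1$ and $p_1, \ldots, p_K \in (0,1]$. Then $\frac{K}{\sum_{j=1}^K p_j} \geq \frac{1 + \sum_{k=1}^{K-1} \binom{K}{k}^{-1} \sum_{|J|=k} \prod_{j \in J}(1 - p_j)}{1 - \prod_{j=1}^K (1 - p_j)}. -/
open Finset

section Aux

variable {ι : Type*} [DecidableEq ι]

/-- Elementary symmetric sum of `q` of degree `k` over a finset `s`. -/
noncomputable def esum (q : ι → ℝ) (k : ℕ) (s : Finset ι) : ℝ :=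
  ∑ J ∈ s.powersetCard k, ∏ j ∈ J, q j

lemma esum_zero (q : ι → ℝ) (s : Finset ι) : esum q 0 s = 1 := by
  simp [esum, Finset.powersetCard_zero]

lemma esum_nonneg {q : ι → ℝ} {s : Finset ι} (hq : ∀ j ∈ s, 0 ≤ q j) (k : ℕ) :
    0 ≤ esum q k s := by
  refine Finset.sum_nonneg fun J hJ => Finset.prod_nonneg fun j hj => ?_
  exact hq j ((Finset.mem_powersetCard.mp hJ).1 hj)

lemma esum_insert {q : ι → ℝ} {s : Finset ι} {a : ι} (ha : a ∉ s) (k : ℕ) :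
    esum q (k + 1) (insert a s) = esum q (k + 1) s + q a * esum q k s := by
  unfold esum
  rw [Finset.powersetCard_succ_insert ha, Finset.sum_union, Finset.sum_image]
  · congr 1
    rw [Finset.mul_sum]
    refine Finset.sum_congr rfl fun J hJ => ?_
    have haJ : a ∉ J := fun h => ha ((Finset.mem_powersetCard.mp hJ).1 h)
    rw [Finset.prod_insert haJ]
  · intro J hJ J' hJ' h
    have haJ : a ∉ J := fun hh => ha ((Finset.mem_powersetCard.mp hJ).1 hh)
    have haJ' : a ∉ J' := fun hh => ha ((Finset.mem_powersetCard.mp hJ').1 hh)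
    have := congrArg (fun t => Finset.erase t a) h
    simpa [Finset.erase_insert haJ, Finset.erase_insert haJ'] using this
  · rw [Finset.disjoint_right]
    rintro J hJ hJ'
    obtain ⟨J', _, rfl⟩ := Finset.mem_image.mp hJ
    exact ha ((Finset.mem_powersetCard.mp hJ').1 (Finset.mem_insert_self a J'))

lemma powersetCard_erase (q : ι → ℝ) (s : Finset ι) (k : ℕ) (i : ι) :
    (s.erase i).powersetCard k = (s.powersetCard k).filter fun J => i ∉ J := by
  ext J
  simp only [Finset.mem_powersetCard, Finset.mem_filter, Finset.subset_erase]
  tauto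

/-- Double counting: `∑_{i ∈ s} e_k(s \ i) = (|s| - k) e_k(s)`. -/
lemma sum_esum_erase (q : ι → ℝ) (s : Finset ι) (k : ℕ) :
    ∑ i ∈ s, esum q k (s.erase i) = ((s.card - k : ℕ) : ℝ) * esum q k s := by
  unfold esum
  rw [Finset.mul_sum]
  calc ∑ i ∈ s, ∑ J ∈ (s.erase i).powersetCard k, ∏ j ∈ J, q j
      = ∑ i ∈ s, ∑ J ∈ s.powersetCard k, if i ∉ J then ∏ j ∈ J, q j else 0 := by
        refine Finset.sum_congr rfl fun i _ => ?_
        rw [powersetCard_erase q s k i, Finset.sum_filter]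
    _ = ∑ J ∈ s.powersetCard k, ∑ i ∈ s, if i ∉ J then ∏ j ∈ J, q j else 0 :=
        Finset.sum_comm
    _ = ∑ J ∈ s.powersetCard k, ((s.card - k : ℕ) : ℝ) * ∏ j ∈ J, q j := by
        refine Finset.sum_congr rfl fun J hJ => ?_
        obtain ⟨hJs, hJc⟩ := Finset.mem_powersetCard.mp hJ
        rw [← Finset.sum_filter, Finset.sum_const, nsmul_eq_mul]
        congr 2
        have : s.filter (fun i => i ∉ J) = s \ J := by
          ext x; simp [Finset.mem_sdiff]
        rw [this, Finset.card_sdiff_of_subset hJs, hJc]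

/-- For `i ∈ s`, summing products over `(k+1)`-subsets of `s` containing `i`. -/
lemma sum_powersetCard_mem (q : ι → ℝ) {s : Finset ι} (k : ℕ) {i : ι} (hi : i ∈ s) :
    ∑ T ∈ (s.powersetCard (k + 1)).filter (fun T => i ∈ T), ∏ j ∈ T, q j
      = q i * esum q k (s.erase i) := by
  unfold esum
  rw [Finset.mul_sum]
  refine Finset.sum_nbij' (fun T => T.erase i) (fun J => insert i J) ?_ ?_ ?_ ?_ ?_
  · intro T hT
    obtain ⟨hT', hiT⟩ := Finset.mem_filter.mp hT
    obtain ⟨hTs, hTc⟩ := Finset.mem_powersetCard.mp hT'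
    refine Finset.mem_powersetCard.mpr ⟨Finset.erase_subset_erase _ hTs, ?_⟩
    simp [Finset.card_erase_of_mem hiT, hTc]
  · intro J hJ
    obtain ⟨hJs, hJc⟩ := Finset.mem_powersetCard.mp hJ
    have hiJ : i ∉ J := fun h => (Finset.mem_erase.mp (hJs h)).1 rfl
    refine Finset.mem_filter.mpr ⟨Finset.mem_powersetCard.mpr ⟨?_, ?_⟩,
      Finset.mem_insert_self i J⟩
    · exact Finset.insert_subset hi (hJs.trans (Finset.erase_subset _ _))
    · rw [Finset.card_insert_of_notMem hiJ, hJc]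
  · intro T hT
    exact Finset.insert_erase (Finset.mem_filter.mp hT).2
  · intro J hJ
    have hiJ : i ∉ J := fun h =>
      (Finset.mem_erase.mp ((Finset.mem_powersetCard.mp hJ).1 h)).1 rfl
    exact Finset.erase_insert hiJ
  · intro T hT
    exact (Finset.mul_prod_erase T q (Finset.mem_filter.mp hT).2).symm

/-- Double counting: `∑_{i ∈ s} q_i e_k(s \ i) = (k+1) e_{k+1}(s)`. -/
lemma sum_q_esum_erase (q : ι → ℝ) (s : Finset ι) (k : ℕ) :
    ∑ i ∈ s, q i * esum q k (s.erase i) = ((k + 1 : ℕ) : ℝ) * esum q (k + 1) s := by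
  calc ∑ i ∈ s, q i * esum q k (s.erase i)
      = ∑ i ∈ s, ∑ T ∈ (s.powersetCard (k + 1)).filter (fun T => i ∈ T), ∏ j ∈ T, q j := by
        refine Finset.sum_congr rfl fun i hi => (sum_powersetCard_mem q k hi).symm
    _ = ∑ i ∈ s, ∑ T ∈ s.powersetCard (k + 1), if i ∈ T then ∏ j ∈ T, q j else 0 := by
        exact Finset.sum_congr rfl fun i _ => Finset.sum_filter _ _
    _ = ∑ T ∈ s.powersetCard (k + 1), ∑ i ∈ s, if i ∈ T then ∏ j ∈ T, q j else 0 :=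
        Finset.sum_comm
    _ = ∑ T ∈ s.powersetCard (k + 1), ((k + 1 : ℕ) : ℝ) * ∏ j ∈ T, q j := by
        refine Finset.sum_congr rfl fun T hT => ?_
        obtain ⟨hTs, hTc⟩ := Finset.mem_powersetCard.mp hT
        rw [← Finset.sum_filter, Finset.sum_const, nsmul_eq_mul]
        congr 2
        have : s.filter (fun i => i ∈ T) = T := by
          ext x
          simp only [Finset.mem_filter]
          exact ⟨fun h => h.2, fun h => ⟨hTs h, h⟩⟩
        rw [this, hTc]
    _ = ((k + 1 : ℕ) : ℝ) * esum q (k + 1) s := by rw [esum, Finset.mul_sum]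

/-- Monotone comparison: if `q i ≤ q j` then `e_k(s \ j) ≤ e_k(s \ i)`. -/
lemma esum_erase_anti {q : ι → ℝ} {s : Finset ι} (hq : ∀ j ∈ s, 0 ≤ q j) (k : ℕ)
    {i j : ι} (hi : i ∈ s) (hj : j ∈ s) (hij : q i ≤ q j) :
    esum q k (s.erase j) ≤ esum q k (s.erase i) := by
  rcases eq_or_ne i j with rfl | hne
  · exact le_refl _
  cases k with
  | zero => simp [esum_zero]
  | succ k =>
    set u := (s.erase i).erase j with hu
    have hji : (s.erase j).erase i = u := Finset.erase_right_comm
    have hjmem : j ∈ s.erase i := Finset.mem_erase.mpr ⟨hne.symm, hj⟩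
    have himem : i ∈ s.erase j := Finset.mem_erase.mpr ⟨hne, hi⟩
    have h1 : s.erase i = insert j u := (Finset.insert_erase hjmem).symm
    have h2 : s.erase j = insert i u := by
      rw [← hji]; exact (Finset.insert_erase himem).symm
    have hju : j ∉ u := Finset.notMem_erase _ _
    have hiu : i ∉ u := by rw [← hji]; exact Finset.notMem_erase _ _
    have h0 : 0 ≤ esum q k u := by
      refine esum_nonneg (fun x hx => hq x ?_) k
      exact Finset.mem_of_mem_erase (Finset.mem_of_mem_erase hx)
    rw [h1, h2, esum_insert hju, esum_insert hiu]
    have := mul_le_mul_of_nonneg_right hij h0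
    linarith

end Aux

/-- For `p_1, ..., p_K ∈ (0,1]`,
`K / (∑ p_j) ≥ (1 + ∑_{k=1}^{K-1} C(K,k)⁻¹ ∑_{|J|=k} ∏_{j∈J} (1-p_j)) / (1 - ∏ (1-p_j))`,
i.e. the expected number of excursions under the random walk dominates that of the
local negative feedback dynamics. -/
theorem rw_excursions_ge_negFeedback (K : ℕ) (hK : 1 ≤ K) (p : Fin K → ℝ)
    (hp : ∀ j, p j ∈ Set.Ioc (0 : ℝ) 1) :
    (1 + ∑ k ∈ Finset.Icc 1 (K - 1), ((K.choose k : ℝ))⁻¹ *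
        ∑ J ∈ Finset.powersetCard k (Finset.univ : Finset (Fin K)), ∏ j ∈ J, (1 - p j))
      / (1 - ∏ j, (1 - p j))
    ≤ (K : ℝ) / ∑ j, p j := by
  have hKpos : (0 : ℝ) < K := by exact_mod_cast hK
  haveI : Nonempty (Fin K) := ⟨⟨0, by omega⟩⟩
  set q : Fin K → ℝ := fun j => 1 - p j with hq_def
  have hq0 : ∀ j, 0 ≤ q j := fun j => by
    have := (hp j).2; simp only [hq_def]; linarith
  have hq1 : ∀ j, q j < 1 := fun j => by
    have := (hp j).1; simp only [hq_def]; linarith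
  set S : ℝ := ∑ j, q j with hS_def
  have hcard : (Finset.univ : Finset (Fin K)).card = K := by
    simp [Finset.card_univ]
  have hsump : ∑ j, p j = K - S := by
    have hpq : ∀ j ∈ (Finset.univ : Finset (Fin K)), p j = 1 - q j := fun j _ => by
      simp [hq_def]
    rw [Finset.sum_congr rfl hpq, Finset.sum_sub_distrib, Finset.sum_const, hcard, hS_def]
    simp
  set a : ℕ → ℝ := fun k => ((K.choose k : ℝ))⁻¹ * esum q k Finset.univ with ha_def
  have ha0 : a 0 = 1 := by simp [ha_def, esum_zero]
  have haK : a K = ∏ j, q j := by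
    have hself : (Finset.univ : Finset (Fin K)).powersetCard K = {Finset.univ} := by
      have h := Finset.powersetCard_self (Finset.univ : Finset (Fin K))
      rwa [hcard] at h
    rw [ha_def]
    simp [esum, hself, Nat.choose_self]
  -- Key step: a (k+1) ≤ (S/K) * a k, via Chebyshev's sum inequality.
  have key : ∀ k, k < K → a (k + 1) ≤ S / K * a k := by
    intro k hk
    have hCk : (0 : ℝ) < (K.choose k : ℝ) := by exact_mod_cast Nat.choose_pos hk.le
    have hCk1 : (0 : ℝ) < (K.choose (k + 1) : ℝ) := by exact_mod_cast Nat.choose_pos hk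
    have hanti : AntivaryOn q (fun i => esum q k (Finset.univ.erase i))
        ↑(Finset.univ : Finset (Fin K)) := by
      intro i _ j _ hlt
      by_contra hc
      push_neg at hc
      have := esum_erase_anti (fun x _ => hq0 x) k (Finset.mem_univ i)
        (Finset.mem_univ j) hc.le
      simp only at hlt
      linarith
    have hcheb := hanti.card_mul_sum_le_sum_mul_sum
    rw [sum_q_esum_erase q Finset.univ k, sum_esum_erase q Finset.univ k, hcard] at hcheb
    have hid : (K.choose (k + 1) : ℝ) * ((k + 1 : ℕ) : ℝ)
        = (K.choose k : ℝ) * ((K - k : ℕ) : ℝ) := by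
      exact_mod_cast congrArg (Nat.cast : ℕ → ℝ) (Nat.choose_succ_right_eq K k)
    push_cast [Nat.cast_sub hk.le] at hcheb hid
    rw [ha_def]
    simp only
    rw [inv_mul_eq_div, inv_mul_eq_div, div_mul_div_comm, div_le_div_iff₀ hCk1
      (by positivity)]
    have hk1 : (0 : ℝ) < (k : ℝ) + 1 := by positivity
    refine le_of_mul_le_mul_right ?_ hk1
    calc esum q (k + 1) Finset.univ * ((K : ℝ) * (K.choose k : ℝ)) * ((k : ℝ) + 1)
        = (K : ℝ) * (((k : ℝ) + 1) * esum q (k + 1) Finset.univ) * (K.choose k : ℝ) := by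
          ring
      _ ≤ S * (((K : ℝ) - (k : ℝ)) * esum q k Finset.univ) * (K.choose k : ℝ) :=
          mul_le_mul_of_nonneg_right hcheb hCk.le
      _ = S * esum q k Finset.univ * (K.choose (k + 1) : ℝ) * ((k : ℝ) + 1) := by
          linear_combination (-(S * esum q k Finset.univ)) * hid
  -- Telescoping sum.
  have htel : (1 - S / K) * ∑ k ∈ Finset.range K, a k ≤ 1 - ∏ j, q j := by
    rw [Finset.mul_sum]
    calc ∑ k ∈ Finset.range K, (1 - S / K) * a k
        ≤ ∑ k ∈ Finset.range K, (a k - a (k + 1)) := by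
          refine Finset.sum_le_sum fun k hk => ?_
          have h := key k (Finset.mem_range.mp hk)
          have h2 := sub_le_sub_left h (a k)
          nlinarith [h2]
      _ = a 0 - a K := Finset.sum_range_sub' a K
      _ = 1 - ∏ j, q j := by rw [ha0, haK]
  -- Identify the numerator with ∑_{k < K} a k.
  have hrange : Finset.range K = insert 0 (Finset.Icc 1 (K - 1)) := by
    ext x
    simp only [Finset.mem_range, Finset.mem_insert, Finset.mem_Icc]
    omega
  have hN : (1 : ℝ) + ∑ k ∈ Finset.Icc 1 (K - 1), ((K.choose k : ℝ))⁻¹ *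
        ∑ J ∈ Finset.powersetCard k (Finset.univ : Finset (Fin K)), ∏ j ∈ J, q j
      = ∑ k ∈ Finset.range K, a k := by
    rw [hrange, Finset.sum_insert (by simp), ha0]
    congr 1
  -- Positivity facts.
  have hprodlt : ∏ j, q j < 1 := by
    set j0 : Fin K := ⟨0, by omega⟩
    calc ∏ j, q j = q j0 * ∏ j ∈ Finset.univ.erase j0, q j :=
          (Finset.mul_prod_erase Finset.univ q (Finset.mem_univ j0)).symm
      _ ≤ q j0 * 1 := by
          refine mul_le_mul_of_nonneg_left ?_ (hq0 j0)
          exact Finset.prod_le_one (fun x _ => hq0 x) (fun x _ => (hq1 x).le)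
      _ = q j0 := mul_one _
      _ < 1 := hq1 j0
  have hD : (0 : ℝ) < 1 - ∏ j, q j := by linarith
  have hKS : (0 : ℝ) < (K : ℝ) - S := by
    have hSK : S < K := by
      calc S = ∑ j, q j := rfl
        _ < ∑ _j : Fin K, (1 : ℝ) :=
            Finset.sum_lt_sum_of_nonempty Finset.univ_nonempty (fun j _ => hq1 j)
        _ = K := by rw [Finset.sum_const, hcard]; simp
    linarith
  rw [hsump, hN, div_le_div_iff₀ hD hKS]
  have hmul := mul_le_mul_of_nonneg_left htel hKpos.le
  have hexp : (K : ℝ) * ((1 - S / K) * ∑ k ∈ Finset.range K, a k)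
      = (∑ k ∈ Finset.range K, a k) * ((K : ℝ) - S) := by
    field_simp
  linarith
end

section
/- Let $p_1, \ldots, p_K \in [0,1]$ with $\prod_{j=1}^K (1-p_j) < 1$. Then $\sum_{k=1}^K k \frac{(k-1)!(K-k)!}{K!} \sum_{|J|=k-1} \sum_{l \notin J} p_l \prod_{j \in J}(1-p_j) = 1 - K\prod_{j=1}^K (1-p_j) + \sum_{k=1}^{K-1} \binom{K}{k}^{-1} \sum_{|J|=k} \prod_{j \in J}(1-p_j)$. -/
open Finset

private lemma esymm_step (n m : ℕ) (q : Fin n → ℝ) :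
    ∑ J ∈ powersetCard m (univ : Finset (Fin n)), (∑ l ∈ univ \ J, q l) * ∏ j ∈ J, q j
      = ((m : ℝ) + 1) * ∑ J ∈ powersetCard (m+1) (univ : Finset (Fin n)), ∏ j ∈ J, q j := by
  have rhs : ((m:ℝ)+1) * ∑ J ∈ powersetCard (m+1) (univ : Finset (Fin n)), ∏ j ∈ J, q j
      = ∑ J ∈ powersetCard (m+1) (univ : Finset (Fin n)), ∑ l ∈ J, ∏ j ∈ J, q j := by
    rw [mul_sum]
    refine sum_congr rfl fun J hJ => ?_
    rw [sum_const, (mem_powersetCard.mp hJ).2, nsmul_eq_mul]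
    push_cast; ring
  rw [rhs]
  simp only [sum_mul]
  rw [Finset.sum_sigma' _ (fun J => univ \ J) (fun J l => q l * ∏ j ∈ J, q j),
      Finset.sum_sigma' _ (fun J => J) (fun J _ => ∏ j ∈ J, q j)]
  refine Finset.sum_bij' (fun x _ => (⟨insert x.2 x.1, x.2⟩ : Σ _ : Finset (Fin n), Fin n))
    (fun y _ => (⟨y.1.erase y.2, y.2⟩ : Σ _ : Finset (Fin n), Fin n)) ?_ ?_ ?_ ?_ ?_
  · rintro ⟨J, l⟩ h
    simp only [mem_sigma, mem_powersetCard, mem_sdiff, mem_univ, true_and] at h ⊢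
    refine ⟨⟨subset_univ _, ?_⟩, mem_insert_self _ _⟩
    rw [card_insert_of_notMem h.2, h.1.2]
  · rintro ⟨J, l⟩ h
    simp only [mem_sigma, mem_powersetCard, mem_sdiff, mem_univ, true_and] at h ⊢
    refine ⟨⟨subset_univ _, ?_⟩, notMem_erase _ _⟩
    rw [card_erase_of_mem h.2, h.1.2]
    omega
  · rintro ⟨J, l⟩ h
    simp only [mem_sigma, mem_powersetCard, mem_sdiff, mem_univ, true_and] at h
    simp [erase_insert h.2]
  · rintro ⟨J, l⟩ h
    simp only [mem_sigma, mem_powersetCard, mem_sdiff, mem_univ, true_and] at h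
    simp [insert_erase h.2]
  · rintro ⟨J, l⟩ h
    simp only [mem_sigma, mem_powersetCard, mem_sdiff, mem_univ, true_and] at h
    exact (prod_insert h.2).symm

/-- the algebraic rearrangement identity for the expected position of the
first success within a uniformly random permutation block of `K` Bernoulli trials:
`∑_{k=1}^K k ((k-1)!(K-k)!/K!) ∑_{|J|=k-1} (∑_{l∉J} p_l) ∏_{j∈J}(1-p_j)
  = 1 - K ∏_{j=1}^K (1-p_j) + ∑_{k=1}^{K-1} C(K,k)⁻¹ ∑_{|J|=k} ∏_{j∈J}(1-p_j)`. -/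
theorem first_success_position_identity (K : ℕ) (hK : 1 ≤ K) (p : Fin K → ℝ)
    (hp : ∀ j, p j ∈ Set.Icc (0 : ℝ) 1) (hprod : ∏ j, (1 - p j) < 1) :
    ∑ k ∈ Finset.Icc 1 K, (k : ℝ) *
        (((k - 1).factorial : ℝ) * ((K - k).factorial : ℝ) / (K.factorial : ℝ)) *
        ∑ J ∈ Finset.powersetCard (k - 1) (Finset.univ : Finset (Fin K)),
          (∑ l ∈ Finset.univ \ J, p l) * ∏ j ∈ J, (1 - p j)
      = 1 - (K : ℝ) * ∏ j, (1 - p j) +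
          ∑ k ∈ Finset.Icc 1 (K - 1), ((K.choose k : ℝ))⁻¹ *
            ∑ J ∈ Finset.powersetCard k (Finset.univ : Finset (Fin K)), ∏ j ∈ J, (1 - p j) := by
  set q : Fin K → ℝ := fun j => 1 - p j with hq
  set S : ℕ → ℝ := fun m => ∑ J ∈ powersetCard m (univ : Finset (Fin K)), ∏ j ∈ J, q j with hS
  set f : ℕ → ℝ := fun k => (k : ℝ) * ((K.choose k : ℝ))⁻¹ * S k with hf
  have hKfac : (K.factorial : ℝ) ≠ 0 := Nat.cast_ne_zero.mpr (Nat.factorial_ne_zero K)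
  -- inner sum identity
  have inner_eq : ∀ i : ℕ, i < K →
      ∑ J ∈ powersetCard i (univ : Finset (Fin K)), (∑ l ∈ univ \ J, p l) * ∏ j ∈ J, q j
        = ((K : ℝ) - i) * S i - ((i : ℝ) + 1) * S (i+1) := by
    intro i hi
    have h1 : ∀ J ∈ powersetCard i (univ : Finset (Fin K)),
        (∑ l ∈ univ \ J, p l) * ∏ j ∈ J, q j
          = ((K : ℝ) - i) * ∏ j ∈ J, q j - (∑ l ∈ univ \ J, q l) * ∏ j ∈ J, q j := by
      intro J hJ
      have hcard : (univ \ J).card = K - i := by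
        rw [card_sdiff_of_subset (subset_univ J), (mem_powersetCard.mp hJ).2, card_univ, Fintype.card_fin]
      have : ∑ l ∈ univ \ J, p l = ((K : ℝ) - i) - ∑ l ∈ univ \ J, q l := by
        have : ∑ l ∈ univ \ J, p l = ∑ l ∈ univ \ J, ((1 : ℝ) - q l) := by
          refine sum_congr rfl fun l _ => by simp [hq]
        rw [this, sum_sub_distrib, sum_const, hcard, nsmul_eq_mul, mul_one,
          Nat.cast_sub hi.le]
      rw [this]; ring
    rw [sum_congr rfl h1, sum_sub_distrib, ← mul_sum, esymm_step K i q]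
  -- rewrite LHS over range K
  rw [show (Finset.Icc 1 K) = Finset.Ico 1 (K+1) by rw [Finset.Ico_add_one_right_eq_Icc],
    Finset.sum_Ico_eq_sum_range]
  simp only [Nat.add_sub_cancel, Nat.add_sub_cancel_left]
  have step : ∀ i ∈ Finset.range K,
      ((1 + i : ℕ) : ℝ) * ((i.factorial : ℝ) * ((K - (1 + i)).factorial : ℝ) / (K.factorial : ℝ)) *
        ∑ J ∈ powersetCard i (univ : Finset (Fin K)), (∑ l ∈ univ \ J, p l) * ∏ j ∈ J, q j
      = (f i - f (i+1)) + ((K.choose i : ℝ))⁻¹ * S i := by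
    intro i hi
    rw [mem_range] at hi
    rw [inner_eq i hi]
    have hc1 : (K.choose i : ℝ) * i.factorial * (K - i).factorial = K.factorial := by
      exact_mod_cast Nat.choose_mul_factorial_mul_factorial hi.le
    have hc2 : (K.choose (i+1) : ℝ) * (i+1).factorial * (K - (i+1)).factorial = K.factorial := by
      exact_mod_cast Nat.choose_mul_factorial_mul_factorial hi
    have hch1 : (K.choose i : ℝ) ≠ 0 := Nat.cast_ne_zero.mpr (Nat.choose_pos hi.le).ne'
    have hch2 : (K.choose (i+1) : ℝ) ≠ 0 := Nat.cast_ne_zero.mpr (Nat.choose_pos hi).ne'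
    have hKi : (K - i : ℕ) = (K - (i+1)) + 1 := by omega
    have hfacKi : ((K - i).factorial : ℝ) = ((K - (i+1)) + 1 : ℕ) * ((K - (i+1)).factorial : ℝ) := by
      rw [hKi]; exact_mod_cast congrArg (Nat.cast (R := ℝ)) (Nat.factorial_succ _)
    have hfaci : ((i+1).factorial : ℝ) = (i + 1 : ℕ) * (i.factorial : ℝ) := by
      exact_mod_cast congrArg (Nat.cast (R := ℝ)) (Nat.factorial_succ i)
    have hKcast : ((K : ℝ) - i) = ((K - (i+1) : ℕ) : ℝ) + 1 := by
      have : (K - (i+1) : ℕ) = K - (i+1) := rfl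
      push_cast [Nat.cast_sub hi]
      ring
    rw [hfacKi] at hc1
    rw [hfaci] at hc2
    push_cast at hc1 hc2
    have hA : ((1 + i : ℕ) : ℝ) * ((i.factorial : ℝ) * ((K - (1 + i)).factorial : ℝ) / (K.factorial : ℝ))
        * ((K : ℝ) - i) = ((i:ℝ) + 1) * ((K.choose i : ℝ))⁻¹ := by
      rw [hKcast, add_comm 1 i]
      field_simp
      push_cast
      linear_combination ((i:ℝ) + 1) * hc1
    have hB : ((1 + i : ℕ) : ℝ) * ((i.factorial : ℝ) * ((K - (1 + i)).factorial : ℝ) / (K.factorial : ℝ))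
        * ((i:ℝ) + 1) = ((i:ℝ) + 1) * ((K.choose (i+1) : ℝ))⁻¹ := by
      rw [add_comm 1 i]
      field_simp
      push_cast
      linear_combination hc2
    calc ((1 + i : ℕ) : ℝ) * ((i.factorial : ℝ) * ((K - (1 + i)).factorial : ℝ) / (K.factorial : ℝ)) *
          (((K : ℝ) - i) * S i - ((i : ℝ) + 1) * S (i+1))
        = (((1 + i : ℕ) : ℝ) * ((i.factorial : ℝ) * ((K - (1 + i)).factorial : ℝ) / (K.factorial : ℝ))
            * ((K : ℝ) - i)) * S i
          - (((1 + i : ℕ) : ℝ) * ((i.factorial : ℝ) * ((K - (1 + i)).factorial : ℝ) / (K.factorial : ℝ))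
            * ((i:ℝ) + 1)) * S (i+1) := by ring
      _ = (((i:ℝ) + 1) * ((K.choose i : ℝ))⁻¹) * S i
          - (((i:ℝ) + 1) * ((K.choose (i+1) : ℝ))⁻¹) * S (i+1) := by rw [hA, hB]
      _ = (f i - f (i+1)) + ((K.choose i : ℝ))⁻¹ * S i := by
          simp only [hf]; push_cast; ring
  rw [Finset.sum_congr rfl step, Finset.sum_add_distrib, Finset.sum_range_sub' f K]
  have hf0 : f 0 = 0 := by simp [hf]
  have hfK : f K = (K : ℝ) * ∏ j, q j := by
    simp only [hf, hS, Nat.choose_self, Nat.cast_one, inv_one, mul_one]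
    have : powersetCard K (univ : Finset (Fin K)) = {univ} := by
      have := Finset.powersetCard_self (univ : Finset (Fin K))
      rwa [card_univ, Fintype.card_fin] at this
    rw [this, Finset.sum_singleton]
  have hS0 : S 0 = 1 := by simp [hS]
  have htail : ∑ i ∈ Finset.range K, ((K.choose i : ℝ))⁻¹ * S i
      = 1 + ∑ k ∈ Finset.Icc 1 (K - 1), ((K.choose k : ℝ))⁻¹ * S k := by
    obtain ⟨K', rfl⟩ : ∃ K', K = K' + 1 := ⟨K - 1, by omega⟩
    rw [Finset.sum_range_succ' (fun i => ((K' + 1).choose i : ℝ)⁻¹ * S i) K']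
    rw [show Finset.Icc 1 (K' + 1 - 1) = Finset.Ico 1 (K' + 1) by
      rw [Nat.add_sub_cancel, Finset.Ico_add_one_right_eq_Icc], Finset.sum_Ico_eq_sum_range]
    simp only [Nat.add_sub_cancel, Nat.choose_zero_right, Nat.cast_one, inv_one, one_mul, hS0]
    rw [add_comm]
    congr 1
    exact Finset.sum_congr rfl fun i _ => by rw [add_comm 1 i]
  rw [hf0, hfK, htail]
  ring
end

section
/- Consider the negative feedback walk on the path graph with nodes $\{0,1,\ldots,n\}$, $n \geq 1$, started at node $0$. Then node $0$ is visited at most $n-1$ times (excluding time $0$) before the walk first reaches node $n$. -/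
open Finset
open scoped Classical

/-- `transCount w t i j`: the number of transitions from node `i` to node `j` made by
the trajectory `w` before time `t`. -/
noncomputable def transCount {V : Type*} (w : ℕ → V) (t : ℕ) (i j : V) : ℕ :=
  ((Finset.range t).filter (fun s => w s = i ∧ w (s + 1) = j)).card

/-- A trajectory `w` is admissible for the negative feedback ("favor least") walk on the
graph with adjacency relation `Adj`: each step goes to a neighbour of the current node
whose prior transition count from the current node is minimal. -/
def IsNegFeedbackWalk {V : Type*} (Adj : V → V → Prop) (w : ℕ → V) : Prop :=
  ∀ t : ℕ, Adj (w t) (w (t + 1)) ∧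
    ∀ j : V, Adj (w t) j → transCount w t (w t) (w (t + 1)) ≤ transCount w t (w t) j

/-- Adjacency of the path graph on `{0, 1, ..., n}`. -/
def pathAdj (n : ℕ) (i j : Fin (n + 1)) : Prop :=
  (j : ℕ) = (i : ℕ) + 1 ∨ (i : ℕ) = (j : ℕ) + 1


namespace NegFBAux

variable {n : ℕ}

noncomputable def cnt (w : ℕ → Fin (n+1)) (t a b : ℕ) : ℕ :=
  ((Finset.range t).filter (fun s => (w s : ℕ) = a ∧ (w (s+1) : ℕ) = b)).card

lemma cnt_eq (w : ℕ → Fin (n+1)) (t : ℕ) (a b : Fin (n+1)) :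
    cnt w t (a : ℕ) (b : ℕ) = transCount w t a b := by
  unfold cnt transCount
  refine congrArg Finset.card ?_
  ext s
  simp [Fin.ext_iff]

lemma cnt_succ (w : ℕ → Fin (n+1)) (t a b : ℕ) :
    cnt w (t+1) a b = cnt w t a b +
      if ((w t : ℕ) = a ∧ (w (t+1) : ℕ) = b) then 1 else 0 := by
  unfold cnt
  by_cases h : (w t : ℕ) = a ∧ (w (t+1) : ℕ) = b
  · rw [if_pos h, Finset.range_add_one, Finset.filter_insert, if_pos h,
      Finset.card_insert_of_notMem (by simp)]
  · rw [if_neg h, Finset.range_add_one, Finset.filter_insert, if_neg h, add_zero]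

noncomputable def xx (w : ℕ → Fin (n+1)) (i t : ℕ) : ℤ :=
  (cnt w t i (i-1) : ℤ) - (cnt w t i (i+1) : ℤ)

lemma step_dir (w : ℕ → Fin (n+1)) (hw : IsNegFeedbackWalk (pathAdj n) w)
    (t i : ℕ) (hi1 : 1 ≤ i) (hi2 : i < n) (hwt : (w t : ℕ) = i) :
    ((w (t+1) : ℕ) = i - 1 ∧ cnt w t i (i-1) ≤ cnt w t i (i+1)) ∨
    ((w (t+1) : ℕ) = i + 1 ∧ cnt w t i (i+1) ≤ cnt w t i (i-1)) := by
  obtain ⟨hadj, hmin⟩ := hw t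
  have e1 := cnt_eq w t (w t) (w (t+1))
  rw [hwt] at e1
  rcases hadj with h | h
  · right
    have h' : (w (t+1) : ℕ) = i + 1 := by omega
    refine ⟨h', ?_⟩
    have hb1 : i - 1 < n + 1 := by omega
    have hjl : ((⟨i-1, hb1⟩ : Fin (n+1)) : ℕ) = i - 1 := rfl
    have hadjl : pathAdj n (w t) (⟨i-1, hb1⟩ : Fin (n+1)) := by
      unfold pathAdj
      rw [hjl, hwt]
      omega
    have e2 := cnt_eq w t (w t) (⟨i-1, hb1⟩ : Fin (n+1))
    rw [hwt, hjl] at e2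
    have hmin' := hmin _ hadjl
    rw [← e1, ← e2, h'] at hmin'
    exact hmin'
  · left
    have h' : (w (t+1) : ℕ) = i - 1 := by omega
    refine ⟨h', ?_⟩
    have hb1 : i + 1 < n + 1 := by omega
    have hjr : ((⟨i+1, hb1⟩ : Fin (n+1)) : ℕ) = i + 1 := rfl
    have hadjr : pathAdj n (w t) (⟨i+1, hb1⟩ : Fin (n+1)) := by
      unfold pathAdj
      rw [hjr, hwt]
      omega
    have e2 := cnt_eq w t (w t) (⟨i+1, hb1⟩ : Fin (n+1))
    rw [hwt, hjr] at e2
    have hmin' := hmin _ hadjr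
    rw [← e1, ← e2, h'] at hmin'
    exact hmin'

lemma xx_bound (w : ℕ → Fin (n+1)) (hw : IsNegFeedbackWalk (pathAdj n) w) :
    ∀ t i, 1 ≤ i → i < n → -1 ≤ xx w i t ∧ xx w i t ≤ 1 := by
  intro t
  induction t with
  | zero => intro i _ _; simp [xx, cnt]
  | succ t ih =>
    intro i hi1 hi2
    have hx := ih i hi1 hi2
    unfold xx at *
    rw [cnt_succ, cnt_succ]
    by_cases hwt : (w t : ℕ) = i
    · rcases step_dir w hw t i hi1 hi2 hwt with ⟨hl, hle⟩ | ⟨hr, hle⟩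
      · rw [if_pos ⟨hwt, hl⟩, if_neg (by rintro ⟨-, h2⟩; omega)]
        push_cast; omega
      · rw [if_neg (by rintro ⟨-, h2⟩; omega), if_pos ⟨hwt, hr⟩]
        push_cast; omega
    · rw [if_neg (by tauto), if_neg (by tauto)]
      push_cast; omega

noncomputable def SS (w : ℕ → Fin (n+1)) (t : ℕ) : ℤ :=
  ∑ i ∈ Finset.Ico 1 n, xx w i t

lemma SS_bound (w : ℕ → Fin (n+1)) (hw : IsNegFeedbackWalk (pathAdj n) w)
    (hn : 1 ≤ n) (t : ℕ) : SS w t ≤ (n : ℤ) - 1 := by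
  have h1 : SS w t ≤ ∑ _i ∈ Finset.Ico 1 n, (1 : ℤ) :=
    Finset.sum_le_sum (fun i hi => by
      simp only [Finset.mem_Ico] at hi
      exact (xx_bound w hw t i hi.1 hi.2).2)
  simp only [Finset.sum_const, Nat.card_Ico, nsmul_eq_mul, mul_one] at h1
  have : ((n - 1 : ℕ) : ℤ) = (n : ℤ) - 1 := by omega
  omega

lemma SS_succ (w : ℕ → Fin (n+1)) (t p : ℕ) (hp : (w t : ℕ) = p)
    (hp1 : 1 ≤ p) (hpn : p < n) :
    SS w (t+1) = SS w t + (xx w p (t+1) - xx w p t) := by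
  unfold SS
  have key : ∀ i ∈ Finset.Ico 1 n,
      xx w i (t+1) = xx w i t + (if i = p then xx w p (t+1) - xx w p t else 0) := by
    intro i hi
    by_cases h : i = p
    · subst h; simp
    · rw [if_neg h, add_zero]
      unfold xx
      rw [cnt_succ, cnt_succ, if_neg (fun hc => h (by omega)),
        if_neg (fun hc => h (by omega))]
      simp
  rw [Finset.sum_congr rfl key, Finset.sum_add_distrib,
    Finset.sum_ite_eq' (Finset.Ico 1 n) p,
    if_pos (by simp only [Finset.mem_Ico]; omega)]

lemma SS_eq (w : ℕ → Fin (n+1)) (hw : IsNegFeedbackWalk (pathAdj n) w)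
    (h0 : w 0 = 0) :
    ∀ t, (∀ u < t, (w u : ℕ) ≠ n) →
      SS w t = (((Finset.range t).filter (fun u => w u = 0)).card : ℤ) - (w t : ℕ) := by
  intro t
  induction t with
  | zero => intro _; simp [SS, xx, cnt, h0]
  | succ t ih =>
    intro hno
    have ihe := ih (fun u hu => hno u (by omega))
    have hwtn : (w t : ℕ) ≠ n := hno t (by omega)
    have hisLt : (w t : ℕ) < n + 1 := (w t).isLt
    have hlt : (w t : ℕ) < n := by omega
    have hcount : (((Finset.range (t+1)).filter (fun u => w u = 0)).card : ℤ)
        = (((Finset.range t).filter (fun u => w u = 0)).card : ℤ)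
          + (if w t = 0 then 1 else 0) := by
      by_cases h : w t = 0
      · rw [if_pos h, Finset.range_add_one, Finset.filter_insert, if_pos h,
          Finset.card_insert_of_notMem (by simp)]
        push_cast; ring
      · rw [if_neg h, Finset.range_add_one, Finset.filter_insert, if_neg h, add_zero]
    by_cases hp : (w t : ℕ) = 0
    · have hw0 : w t = 0 := by
        apply Fin.ext; simpa using hp
      have hstep : (w (t+1) : ℕ) = 1 := by
        rcases (hw t).1 with h | h <;> omega
      have hSsame : SS w (t+1) = SS w t := by
        unfold SS
        apply Finset.sum_congr rfl
        intro i hi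
        simp only [Finset.mem_Ico] at hi
        unfold xx
        rw [cnt_succ, cnt_succ, if_neg (by rintro ⟨h1, -⟩; omega),
          if_neg (by rintro ⟨h1, -⟩; omega)]
        simp
      rw [hSsame, ihe, hcount, if_pos hw0, hstep, hp]
      push_cast; ring
    · have hi1 : 1 ≤ (w t : ℕ) := by omega
      have hne0 : w t ≠ 0 := by
        intro h; apply hp; rw [h]; rfl
      have hSstep := SS_succ w t (w t : ℕ) rfl hi1 hlt
      rcases step_dir w hw t (w t : ℕ) hi1 hlt rfl with ⟨hl, hle⟩ | ⟨hr, hle⟩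
      · have hxc : xx w (w t : ℕ) (t+1) = xx w (w t : ℕ) t + 1 := by
          unfold xx
          rw [cnt_succ, cnt_succ, if_pos ⟨rfl, hl⟩, if_neg (by rintro ⟨-, h2⟩; omega)]
          push_cast; ring
        rw [hSstep, hxc, ihe, hcount, if_neg hne0, hl]
        omega
      · have hxc : xx w (w t : ℕ) (t+1) = xx w (w t : ℕ) t - 1 := by
          unfold xx
          rw [cnt_succ, cnt_succ, if_neg (by rintro ⟨-, h2⟩; omega), if_pos ⟨rfl, hr⟩]
          push_cast; ring
        rw [hSstep, hxc, ihe, hcount, if_neg hne0, hr]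
        omega

end NegFBAux

/-- along any negative feedback walk on the path `{0, ..., n}` (`n ≥ 1`)
started at node `0`, if node `n` has not been reached by time `m`, then node `0` has
been visited at most `n - 1` times during times `1, ..., m` (excluding time 0). -/
theorem path_negFeedback_root_visits (n : ℕ) (hn : 1 ≤ n) (w : ℕ → Fin (n + 1))
    (hw : IsNegFeedbackWalk (pathAdj n) w) (h0 : w 0 = 0) (m : ℕ)
    (hm : ∀ t ≤ m, w t ≠ (⟨n, Nat.lt_succ_self n⟩ : Fin (n + 1))) :
    ((Finset.Icc 1 m).filter (fun t => w t = 0)).card ≤ n - 1 := by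
  classical
  rcases Finset.eq_empty_or_nonempty ((Finset.Icc 1 m).filter (fun t => w t = 0))
    with hTe | hTe
  · rw [hTe]; simp
  · set t0 := ((Finset.Icc 1 m).filter (fun t => w t = 0)).max' hTe with ht0
    have hmem := Finset.max'_mem _ hTe
    rw [← ht0, Finset.mem_filter, Finset.mem_Icc] at hmem
    obtain ⟨⟨h1t, htm⟩, hwt0⟩ := hmem
    have hno : ∀ u < t0, (w u : ℕ) ≠ n := by
      intro u hu hval
      exact hm u (by omega) (Fin.ext hval)
    have hS := NegFBAux.SS_eq w hw h0 t0 hno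
    have hA : (Finset.range t0).filter (fun u => w u = 0)
        = insert 0 (((Finset.Icc 1 m).filter (fun t => w t = 0)).erase t0) := by
      ext u
      simp only [Finset.mem_filter, Finset.mem_range, Finset.mem_insert,
        Finset.mem_erase, Finset.mem_Icc]
      constructor
      · rintro ⟨hu, hwu⟩
        by_cases h : u = 0
        · exact Or.inl h
        · exact Or.inr ⟨by omega, ⟨by omega, by omega⟩, hwu⟩
      · rintro (rfl | ⟨hne, ⟨hu1, hu2⟩, hwu⟩)
        · exact ⟨by omega, h0⟩
        · have hle : u ≤ t0 := Finset.le_max' _ u (by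
            rw [Finset.mem_filter, Finset.mem_Icc]; exact ⟨⟨hu1, hu2⟩, hwu⟩)
          exact ⟨by omega, hwu⟩
    have hcard : ((Finset.range t0).filter (fun u => w u = 0)).card
        = ((Finset.Icc 1 m).filter (fun t => w t = 0)).card := by
      rw [hA, Finset.card_insert_of_notMem (by
        intro hc
        rw [Finset.mem_erase, Finset.mem_filter, Finset.mem_Icc] at hc
        omega), Finset.card_erase_of_mem (by rw [ht0]; exact Finset.max'_mem _ hTe)]
      have hpos : 0 < ((Finset.Icc 1 m).filter (fun t => w t = 0)).card :=
        Finset.card_pos.mpr hTe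
      omega
    have hb := NegFBAux.SS_bound w hw hn t0
    rw [hcard, hwt0] at hS
    have hz : ((0 : Fin (n+1)) : ℕ) = 0 := rfl
    rw [hz] at hS
    omega
end

section
/- Consider the negative feedback walk on the path graph with nodes $\{0,1,\ldots,n\}$, $n \geq 2$, started at node $0$. The expected cover time satisfies $\mathbb{E}[T_C] < n^2$, i.e., it is strictly smaller than the expected cover time $n^2$ of the simple random walk. -/
open Finset
open scoped Classical

/-- Extend a finite trajectory prefix to an infinite one (constant after time `k`). -/
def extFin {V : Type*} {k : ℕ} (w : Fin (k + 1) → V) : ℕ → V :=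
  fun t => w ⟨min t k, Nat.lt_succ_of_le (Nat.min_le_right t k)⟩

/-- One-step transition probability of the negative feedback walk at time `t` given the
history `w 0, ..., w t`: the next node is uniform on the set of neighbours of `w t`
with minimal prior transition count from `w t`. -/
noncomputable def nfStepProb {V : Type*} [Fintype V] (Adj : V → V → Prop)
    (w : ℕ → V) (t : ℕ) : ℝ :=
  let S := Finset.univ.filter (fun j => Adj (w t) j ∧
    ∀ j' : V, Adj (w t) j' → transCount w t (w t) j ≤ transCount w t (w t) j')
  if w (t + 1) ∈ S then (S.card : ℝ)⁻¹ else 0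

/-- Probability that the negative feedback walk started at `s` produces the trajectory
prefix `w 0, ..., w k`. -/
noncomputable def nfPrefixProb {V : Type*} [Fintype V] (Adj : V → V → Prop) (s : V)
    {k : ℕ} (w : Fin (k + 1) → V) : ℝ :=
  (if w 0 = s then (1 : ℝ) else 0) * ∏ t ∈ Finset.range k, nfStepProb Adj (extFin w) t

/-- `P(T_C > k)` for the negative feedback walk: the probability that the first `k+1`
states do not visit every node. -/
noncomputable def nfCoverSurvival {V : Type*} [Fintype V] (Adj : V → V → Prop) (s : V)
    (k : ℕ) : ℝ :=
  ∑ w : Fin (k + 1) → V, if Function.Surjective w then 0 else nfPrefixProb Adj s w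

/-- Expected cover time of the negative feedback walk, `E[T_C] = ∑_{k ≥ 0} P(T_C > k)`. -/
noncomputable def nfExpCoverTime {V : Type*} [Fintype V] (Adj : V → V → Prop) (s : V) : ℝ :=
  ∑' k : ℕ, nfCoverSurvival Adj s k

section Core
variable {n : ℕ}

/-- rightward exits from node `i` before time `t` -/
noncomputable def Rc (w : ℕ → Fin (n + 1)) (i t : ℕ) : ℕ :=
  ((Finset.range t).filter (fun s => (w s : ℕ) = i ∧ (w (s + 1) : ℕ) = i + 1)).card

/-- leftward exits from node `i` before time `t` -/
noncomputable def Lc (w : ℕ → Fin (n + 1)) (i t : ℕ) : ℕ :=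
  ((Finset.range t).filter (fun s => (w s : ℕ) = i ∧ (w (s + 1) : ℕ) + 1 = i)).card

noncomputable def stepSet (w : ℕ → Fin (n + 1)) (t : ℕ) : Finset (Fin (n + 1)) :=
  Finset.univ.filter (fun j => pathAdj n (w t) j ∧
    ∀ j' : Fin (n + 1), pathAdj n (w t) j' →
      transCount w t (w t) j ≤ transCount w t (w t) j')

def Adm (w : ℕ → Fin (n + 1)) (k : ℕ) : Prop := ∀ t, t < k → w (t + 1) ∈ stepSet w t

lemma Rc_succ (w : ℕ → Fin (n + 1)) (i t : ℕ) :
    Rc w i (t + 1) = Rc w i t +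
      (if (w t : ℕ) = i ∧ (w (t + 1) : ℕ) = i + 1 then 1 else 0) := by
  unfold Rc
  rw [Finset.range_add_one, Finset.filter_insert]
  split
  · rw [Finset.card_insert_of_notMem (by simp)]
  · rfl

lemma Lc_succ (w : ℕ → Fin (n + 1)) (i t : ℕ) :
    Lc w i (t + 1) = Lc w i t +
      (if (w t : ℕ) = i ∧ (w (t + 1) : ℕ) + 1 = i then 1 else 0) := by
  unfold Lc
  rw [Finset.range_add_one, Finset.filter_insert]
  split
  · rw [Finset.card_insert_of_notMem (by simp)]
  · rfl

lemma transCount_eq_Rc (w : ℕ → Fin (n + 1)) (t : ℕ) (y : Fin (n + 1))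
    (hy : (y : ℕ) = (w t : ℕ) + 1) :
    transCount w t (w t) y = Rc w (w t : ℕ) t := by
  unfold transCount Rc
  congr 1
  ext x
  simp only [Finset.mem_filter, Fin.ext_iff, hy]

lemma transCount_eq_Lc (w : ℕ → Fin (n + 1)) (t : ℕ) (y : Fin (n + 1))
    (hy : (y : ℕ) + 1 = (w t : ℕ)) :
    transCount w t (w t) y = Lc w (w t : ℕ) t := by
  unfold transCount Lc
  congr 1
  ext x
  simp only [Finset.mem_filter, Fin.ext_iff]
  constructor
  · rintro ⟨hx, h1, h2⟩; exact ⟨hx, h1, by omega⟩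
  · rintro ⟨hx, h1, h2⟩; exact ⟨hx, h1, by omega⟩

lemma step_adj {w : ℕ → Fin (n + 1)} {t : ℕ} (h : w (t + 1) ∈ stepSet w t) :
    (w (t + 1) : ℕ) = (w t : ℕ) + 1 ∨ (w t : ℕ) = (w (t + 1) : ℕ) + 1 := by
  simp only [stepSet, Finset.mem_filter] at h
  exact h.2.1

lemma step_min {w : ℕ → Fin (n + 1)} {t : ℕ} (h : w (t + 1) ∈ stepSet w t) :
    ∀ j' : Fin (n + 1), pathAdj n (w t) j' →
      transCount w t (w t) (w (t + 1)) ≤ transCount w t (w t) j' := by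
  simp only [stepSet, Finset.mem_filter] at h
  exact h.2.2

lemma step_right_min {w : ℕ → Fin (n + 1)} {t : ℕ} (h : w (t + 1) ∈ stepSet w t)
    (hd : (w (t + 1) : ℕ) = (w t : ℕ) + 1) (h1 : 1 ≤ (w t : ℕ)) :
    Rc w (w t : ℕ) t ≤ Lc w (w t : ℕ) t := by
  have hlt : (w t : ℕ) - 1 < n + 1 := by omega
  have hb : pathAdj n (w t) ⟨(w t : ℕ) - 1, hlt⟩ := Or.inr (by simp; omega)
  have := step_min h _ hb
  rwa [transCount_eq_Rc w t _ hd, transCount_eq_Lc w t _ (by simp; omega)] at this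

lemma step_left_min {w : ℕ → Fin (n + 1)} {t : ℕ} (h : w (t + 1) ∈ stepSet w t)
    (hd : (w t : ℕ) = (w (t + 1) : ℕ) + 1) (h2 : (w t : ℕ) < n) :
    Lc w (w t : ℕ) t ≤ Rc w (w t : ℕ) t := by
  have hlt : (w t : ℕ) + 1 < n + 1 := by omega
  have hb : pathAdj n (w t) ⟨(w t : ℕ) + 1, hlt⟩ := Or.inl (by simp)
  have := step_min h _ hb
  rwa [transCount_eq_Lc w t _ (by omega), transCount_eq_Rc w t _ (by simp)] at this

lemma inv1 {w : ℕ → Fin (n + 1)} {k : ℕ} (hadm : Adm w k) (i : ℕ) (h1 : 1 ≤ i)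
    (h2 : i < n) : ∀ t, t ≤ k → Lc w i t ≤ Rc w i t + 1 ∧ Rc w i t ≤ Lc w i t + 1 := by
  intro t
  induction t with
  | zero => intro _; simp [Rc, Lc]
  | succ t ih =>
    intro ht
    have ih' := ih (by omega)
    have hmem := hadm t (by omega)
    rw [Rc_succ, Lc_succ]
    by_cases hc : (w t : ℕ) = i
    · rcases step_adj hmem with hr | hl
      · have hmin := step_right_min hmem hr (by omega)
        rw [hc] at hmin
        have c1 : ((w t : ℕ) = i ∧ (w (t + 1) : ℕ) = i + 1) := ⟨hc, by omega⟩
        have c2 : ¬((w t : ℕ) = i ∧ (w (t + 1) : ℕ) + 1 = i) := by omega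
        rw [if_pos c1, if_neg c2]
        omega
      · have hmin := step_left_min hmem hl (by omega)
        rw [hc] at hmin
        have c1 : ¬((w t : ℕ) = i ∧ (w (t + 1) : ℕ) = i + 1) := by omega
        have c2 : ((w t : ℕ) = i ∧ (w (t + 1) : ℕ) + 1 = i) := ⟨hc, by omega⟩
        rw [if_neg c1, if_pos c2]
        omega
    · have c1 : ¬((w t : ℕ) = i ∧ (w (t + 1) : ℕ) = i + 1) := by omega
      have c2 : ¬((w t : ℕ) = i ∧ (w (t + 1) : ℕ) + 1 = i) := by omega
      rw [if_neg c1, if_neg c2]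
      omega

lemma inv2 {w : ℕ → Fin (n + 1)} {k : ℕ} (hadm : Adm w k) :
    ∀ t, t ≤ k → ∀ i, 1 ≤ i → i < (w t : ℕ) → Lc w i t ≤ Rc w i t := by
  intro t
  induction t with
  | zero => intro _ i _ _; simp [Rc, Lc]
  | succ t ih =>
    intro ht i hi1 hi2
    have hmem := hadm t (by omega)
    rw [Rc_succ, Lc_succ]
    by_cases hc : (w t : ℕ) = i
    · rcases step_adj hmem with hr | hl
      · have hin : i < n := by have := (w (t + 1)).isLt; omega
        have := (inv1 hadm i hi1 hin t (by omega)).1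
        have c1 : ((w t : ℕ) = i ∧ (w (t + 1) : ℕ) = i + 1) := ⟨hc, by omega⟩
        have c2 : ¬((w t : ℕ) = i ∧ (w (t + 1) : ℕ) + 1 = i) := by omega
        rw [if_pos c1, if_neg c2]
        omega
      · omega
    · have hlt : i < (w t : ℕ) := by rcases step_adj hmem with hr | hl <;> omega
      have c1 : ¬((w t : ℕ) = i ∧ (w (t + 1) : ℕ) = i + 1) := by omega
      have c2 : ¬((w t : ℕ) = i ∧ (w (t + 1) : ℕ) + 1 = i) := by omega
      rw [if_neg c1, if_neg c2]
      simpa using ih (by omega) i hi1 hlt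

lemma ident {w : ℕ → Fin (n + 1)} {k : ℕ} (hadm : Adm w k) (hw0 : (w 0 : ℕ) = 0) :
    ∀ t, t ≤ k → (∀ s, s < t → (w s : ℕ) ≠ n) →
      (t : ℤ) + 2 * ∑ i ∈ Finset.range n, (i : ℤ) * ((Rc w i t : ℤ) - (Lc w i t : ℤ))
        = ((w t : ℕ) : ℤ) ^ 2 := by
  intro t
  induction t with
  | zero => intro _ _; simp [Rc, Lc, hw0]
  | succ t ih =>
    intro ht hs
    have hmem := hadm t (by omega)
    have hne : (w t : ℕ) ≠ n := hs t (by omega)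
    have ihh := ih (by omega) (fun s hs' => hs s (by omega))
    have ha : (w t : ℕ) < n := by have := (w t).isLt; omega
    rcases step_adj hmem with hr | hl
    · have hsum : ∑ i ∈ Finset.range n, (i : ℤ) * ((Rc w i (t+1) : ℤ) - (Lc w i (t+1) : ℤ))
          = (∑ i ∈ Finset.range n, (i : ℤ) * ((Rc w i t : ℤ) - (Lc w i t : ℤ)))
            + ((w t : ℕ) : ℤ) := by
        have hterm : ∀ i ∈ Finset.range n,
            (i : ℤ) * ((Rc w i (t+1) : ℤ) - (Lc w i (t+1) : ℤ))
            = (i : ℤ) * ((Rc w i t : ℤ) - (Lc w i t : ℤ))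
              + (if i = (w t : ℕ) then ((w t : ℕ) : ℤ) else 0) := by
          intro i _
          rw [Rc_succ, Lc_succ]
          by_cases hia : i = (w t : ℕ)
          · have c1 : ((w t : ℕ) = i ∧ (w (t + 1) : ℕ) = i + 1) := ⟨hia.symm, by omega⟩
            have c2 : ¬((w t : ℕ) = i ∧ (w (t + 1) : ℕ) + 1 = i) := by omega
            rw [if_pos c1, if_neg c2, if_pos hia, hia]
            push_cast
            ring
          · have c1 : ¬((w t : ℕ) = i ∧ (w (t + 1) : ℕ) = i + 1) := by omega
            have c2 : ¬((w t : ℕ) = i ∧ (w (t + 1) : ℕ) + 1 = i) := by omega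
            rw [if_neg c1, if_neg c2, if_neg hia]
            push_cast
            ring
        rw [Finset.sum_congr rfl hterm, Finset.sum_add_distrib,
          Finset.sum_ite_eq' (Finset.range n) ((w t : ℕ)) (fun _ => ((w t : ℕ) : ℤ)),
          if_pos (Finset.mem_range.mpr ha)]
      rw [hsum]
      have hval : ((w (t + 1) : ℕ) : ℤ) = ((w t : ℕ) : ℤ) + 1 := by exact_mod_cast hr
      rw [hval]
      push_cast
      nlinarith [ihh]
    · have h1 : 1 ≤ (w t : ℕ) := by omega
      have hsum : ∑ i ∈ Finset.range n, (i : ℤ) * ((Rc w i (t+1) : ℤ) - (Lc w i (t+1) : ℤ))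
          = (∑ i ∈ Finset.range n, (i : ℤ) * ((Rc w i t : ℤ) - (Lc w i t : ℤ)))
            - ((w t : ℕ) : ℤ) := by
        have hterm : ∀ i ∈ Finset.range n,
            (i : ℤ) * ((Rc w i (t+1) : ℤ) - (Lc w i (t+1) : ℤ))
            = (i : ℤ) * ((Rc w i t : ℤ) - (Lc w i t : ℤ))
              + (if i = (w t : ℕ) then -((w t : ℕ) : ℤ) else 0) := by
          intro i _
          rw [Rc_succ, Lc_succ]
          by_cases hia : i = (w t : ℕ)
          · have c1 : ¬((w t : ℕ) = i ∧ (w (t + 1) : ℕ) = i + 1) := by omega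
            have c2 : ((w t : ℕ) = i ∧ (w (t + 1) : ℕ) + 1 = i) := ⟨hia.symm, by omega⟩
            rw [if_neg c1, if_pos c2, if_pos hia, hia]
            push_cast
            ring
          · have c1 : ¬((w t : ℕ) = i ∧ (w (t + 1) : ℕ) = i + 1) := by omega
            have c2 : ¬((w t : ℕ) = i ∧ (w (t + 1) : ℕ) + 1 = i) := by omega
            rw [if_neg c1, if_neg c2, if_neg hia]
            push_cast
            ring
        rw [Finset.sum_congr rfl hterm, Finset.sum_add_distrib,
          Finset.sum_ite_eq' (Finset.range n) ((w t : ℕ)) (fun _ => -((w t : ℕ) : ℤ)),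
          if_pos (Finset.mem_range.mpr ha)]
        ring
      rw [hsum]
      have hval : ((w (t + 1) : ℕ) : ℤ) = ((w t : ℕ) : ℤ) - 1 := by
        have : (w t : ℕ) = (w (t + 1) : ℕ) + 1 := hl
        omega
      rw [hval]
      push_cast
      nlinarith [ihh]

lemma gauss (p : ℕ) : ∀ m : ℕ, p ≤ m →
    2 * ∑ i ∈ Finset.Ico p m, (i : ℤ) = (m : ℤ) * ((m : ℤ) - 1) - (p : ℤ) * ((p : ℤ) - 1) := by
  refine Nat.le_induction ?_ ?_
  · simp
  · intro m hm ih
    rw [Finset.sum_Ico_succ_top hm, mul_add, ih]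
    push_cast
    ring

lemma hit {w : ℕ → Fin (n + 1)} {k : ℕ} (hadm : Adm w k) (hw0 : (w 0 : ℕ) = 0)
    (hk : n ^ 2 ≤ k) (hn : 1 ≤ n) : ∃ s, s ≤ n ^ 2 ∧ (w s : ℕ) = n := by
  by_contra hcon
  push_neg at hcon
  have hid := ident hadm hw0 (n ^ 2) hk (fun s hs => hcon s (by omega))
  set p := (w (n ^ 2) : ℕ) with hp_def
  have hpn : p < n := by
    have h1 := (w (n ^ 2)).isLt
    have h2 := hcon (n ^ 2) le_rfl
    omega
  have hlow : ∀ i ∈ Finset.range n,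
      (if i < p then (0 : ℤ) else -(i : ℤ)) ≤ (i : ℤ) * ((Rc w i (n ^ 2) : ℤ) - (Lc w i (n ^ 2) : ℤ)) := by
    intro i hi
    rw [Finset.mem_range] at hi
    by_cases hi0 : i = 0
    · subst hi0
      simp
    · by_cases hip : i < p
      · rw [if_pos hip]
        have hle : Lc w i (n ^ 2) ≤ Rc w i (n ^ 2) := inv2 hadm (n ^ 2) hk i (by omega) hip
        have hnn : (0 : ℤ) ≤ (Rc w i (n ^ 2) : ℤ) - (Lc w i (n ^ 2) : ℤ) := by
          have := hle; push_cast; omega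
        positivity
      · rw [if_neg hip]
        have hle : Lc w i (n ^ 2) ≤ Rc w i (n ^ 2) + 1 := (inv1 hadm i (by omega) hi (n ^ 2) hk).1
        have hge : (-1 : ℤ) ≤ (Rc w i (n ^ 2) : ℤ) - (Lc w i (n ^ 2) : ℤ) := by
          have := hle; push_cast; omega
        nlinarith [Int.ofNat_nonneg i]
  have hsumlow := Finset.sum_le_sum hlow
  have hsplit : ∑ i ∈ Finset.range n, (if i < p then (0 : ℤ) else -(i : ℤ))
      = -∑ i ∈ Finset.Ico p n, (i : ℤ) := by
    rw [Finset.range_eq_Ico, ← Finset.sum_Ico_consecutive _ (Nat.zero_le p) (le_of_lt hpn)]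
    have h1 : ∑ i ∈ Finset.Ico 0 p, (if i < p then (0 : ℤ) else -(i : ℤ)) = 0 :=
      Finset.sum_eq_zero (fun i hi => by
        rw [if_pos (Finset.mem_Ico.mp hi).2])
    have h2 : ∑ i ∈ Finset.Ico p n, (if i < p then (0 : ℤ) else -(i : ℤ))
        = ∑ i ∈ Finset.Ico p n, -(i : ℤ) :=
      Finset.sum_congr rfl (fun i hi => by
        rw [if_neg (by have := (Finset.mem_Ico.mp hi).1; omega)])
    rw [h1, h2, zero_add, Finset.sum_neg_distrib]
  have hg := gauss p n (le_of_lt hpn)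
  rw [hsplit] at hsumlow
  have e1 : ((p : ℤ)) ^ 2 - (p : ℤ) * ((p : ℤ) - 1) = (p : ℤ) := by ring
  have e2 : ((n : ℤ)) ^ 2 - (n : ℤ) * ((n : ℤ) - 1) = (n : ℤ) := by ring
  have hcast : ((n ^ 2 : ℕ) : ℤ) = (n : ℤ) ^ 2 := by push_cast; ring
  rw [hcast] at hid
  have hlt : (p : ℤ) < (n : ℤ) := by exact_mod_cast hpn
  linarith

lemma ivt {w : ℕ → Fin (n + 1)} {k : ℕ} (hadm : Adm w k) (hw0 : (w 0 : ℕ) = 0) :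
    ∀ s, s ≤ k → ∀ m, m ≤ (w s : ℕ) → ∃ r, r ≤ s ∧ (w r : ℕ) = m := by
  intro s
  induction s with
  | zero => intro _ m hm; exact ⟨0, le_rfl, by omega⟩
  | succ s ih =>
    intro hs m hm
    rcases step_adj (hadm s (by omega)) with hr | hl
    · by_cases hm' : m ≤ (w s : ℕ)
      · obtain ⟨r, hr', he⟩ := ih (by omega) m hm'
        exact ⟨r, by omega, he⟩
      · exact ⟨s + 1, le_rfl, by omega⟩
    · obtain ⟨r, hr', he⟩ := ih (by omega) m (by omega)
      exact ⟨r, by omega, he⟩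

lemma cover {w : ℕ → Fin (n + 1)} {k : ℕ} (hadm : Adm w k) (hw0 : (w 0 : ℕ) = 0)
    (hk : n ^ 2 ≤ k) (hn : 1 ≤ n) : ∀ m : Fin (n + 1), ∃ s, s ≤ k ∧ w s = m := by
  obtain ⟨s0, hs0, he⟩ := hit hadm hw0 hk hn
  intro m
  have hm : (m : ℕ) ≤ (w s0 : ℕ) := by rw [he]; omega
  obtain ⟨r, hr, he'⟩ := ivt hadm hw0 s0 (le_trans hs0 hk) (m : ℕ) hm
  exact ⟨r, le_trans hr (le_trans hs0 hk), Fin.ext he'⟩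

end Core

section Prob
variable {V : Type*} [Fintype V] (Adj : V → V → Prop) (s0 : V)

lemma nfStepProb_nonneg (w : ℕ → V) (t : ℕ) : 0 ≤ nfStepProb Adj w t := by
  unfold nfStepProb
  dsimp only
  split
  · positivity
  · exact le_refl 0

lemma nfPrefixProb_nonneg {k : ℕ} (w : Fin (k + 1) → V) : 0 ≤ nfPrefixProb Adj s0 w := by
  unfold nfPrefixProb
  apply mul_nonneg
  · split <;> norm_num
  · exact Finset.prod_nonneg fun t _ => nfStepProb_nonneg Adj _ t

lemma nfStepProb_congr (w w' : ℕ → V) (t : ℕ) (h : ∀ r, r ≤ t + 1 → w r = w' r) :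
    nfStepProb Adj w t = nfStepProb Adj w' t := by
  have hT : transCount w t = transCount w' t := by
    funext i j
    unfold transCount
    congr 1
    apply Finset.filter_congr
    intro x hx
    rw [Finset.mem_range] at hx
    rw [h x (by omega), h (x + 1) (by omega)]
  have h1 : w t = w' t := h t (by omega)
  have h2 : w (t + 1) = w' (t + 1) := h (t + 1) le_rfl
  simp only [nfStepProb, hT, h1, h2]

lemma extFin_eq {k : ℕ} (w : Fin (k + 1) → V) (r : ℕ) (hr : r ≤ k) :
    extFin w r = w ⟨r, by omega⟩ := by
  simp [extFin, Nat.min_eq_left hr]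

lemma extFin_snoc {k : ℕ} (w : Fin (k + 1) → V) (y : V) (r : ℕ) (hr : r ≤ k) :
    extFin (Fin.snoc w y : Fin (k + 2) → V) r = extFin w r := by
  rw [extFin_eq _ r (by omega), extFin_eq w r hr]
  have he : (⟨r, by omega⟩ : Fin (k + 2)) = Fin.castSucc ⟨r, Nat.lt_succ_of_le hr⟩ := rfl
  rw [he, Fin.snoc_castSucc]

lemma extFin_snoc_last {k : ℕ} (w : Fin (k + 1) → V) (y : V) :
    extFin (Fin.snoc w y : Fin (k + 2) → V) (k + 1) = y := by
  rw [extFin_eq _ (k + 1) le_rfl]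
  have he : (⟨k + 1, by omega⟩ : Fin (k + 2)) = Fin.last (k + 1) := rfl
  rw [he, Fin.snoc_last]

lemma prefix_snoc {k : ℕ} (w : Fin (k + 1) → V) (y : V) :
    nfPrefixProb Adj s0 (Fin.snoc w y : Fin (k + 2) → V)
      = nfPrefixProb Adj s0 w * nfStepProb Adj (extFin (Fin.snoc w y : Fin (k + 2) → V)) k := by
  unfold nfPrefixProb
  rw [Finset.prod_range_succ]
  have h0 : (Fin.snoc w y : Fin (k + 2) → V) 0 = w 0 := by
    have he : (0 : Fin (k + 2)) = Fin.castSucc (0 : Fin (k + 1)) := rfl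
    rw [he, Fin.snoc_castSucc]
  have hsteps : ∀ t ∈ Finset.range k,
      nfStepProb Adj (extFin (Fin.snoc w y : Fin (k + 2) → V)) t
        = nfStepProb Adj (extFin w) t := by
    intro t ht
    rw [Finset.mem_range] at ht
    exact nfStepProb_congr Adj _ _ t (fun r hr => extFin_snoc w y r (by omega))
  rw [Finset.prod_congr rfl hsteps, h0]
  ring

lemma step_sum_le_one {k : ℕ} (w : Fin (k + 1) → V) :
    ∑ y : V, nfStepProb Adj (extFin (Fin.snoc w y : Fin (k + 2) → V)) k ≤ 1 := by
  have hT : ∀ y : V, transCount (extFin (Fin.snoc w y : Fin (k + 2) → V)) k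
      = transCount (extFin w) k := by
    intro y
    funext i j
    unfold transCount
    congr 1
    apply Finset.filter_congr
    intro x hx
    rw [Finset.mem_range] at hx
    rw [extFin_snoc w y x (by omega), extFin_snoc w y (x + 1) (by omega)]
  have hk' : ∀ y : V, extFin (Fin.snoc w y : Fin (k + 2) → V) k = extFin w k :=
    fun y => extFin_snoc w y k le_rfl
  set T := Finset.univ.filter (fun j => Adj (extFin w k) j ∧
    ∀ j' : V, Adj (extFin w k) j' →
      transCount (extFin w) k (extFin w k) j ≤ transCount (extFin w) k (extFin w k) j') with hT_def
  have hstep : ∀ y : V, nfStepProb Adj (extFin (Fin.snoc w y : Fin (k + 2) → V)) k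
      = if y ∈ T then (T.card : ℝ)⁻¹ else 0 := by
    intro y
    simp only [nfStepProb, hT y, hk', extFin_snoc_last, hT_def]
  rw [Finset.sum_congr rfl (fun y _ => hstep y)]
  rw [Finset.sum_ite_mem, Finset.univ_inter, Finset.sum_const, nsmul_eq_mul]
  rcases Nat.eq_zero_or_pos T.card with h | h
  · simp [h]
  · rw [mul_inv_cancel₀ (by positivity)]

lemma sum_prefix_le_one : ∀ k : ℕ, ∑ w : Fin (k + 1) → V, nfPrefixProb Adj s0 w ≤ 1 := by
  intro k
  induction k with
  | zero =>
    rw [← Equiv.sum_comp (Equiv.funUnique (Fin 1) V).symm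
      (fun w : Fin 1 → V => nfPrefixProb Adj s0 w)]
    simp only [nfPrefixProb, Finset.range_zero, Finset.prod_empty, mul_one]
    have : ∀ v : V, ((Equiv.funUnique (Fin 1) V).symm v) 0 = v := fun v => rfl
    simp only [this]
    rw [Finset.sum_ite_eq' Finset.univ s0 (fun _ => (1 : ℝ))]
    simp
  | succ k ih =>
    rw [← Equiv.sum_comp (Fin.snocEquiv (fun _ : Fin (k + 2) => V))
      (fun w : Fin (k + 2) → V => nfPrefixProb Adj s0 w)]
    rw [Fintype.sum_prod_type]
    have hsw : ∀ (y : V) (w : Fin (k + 1) → V),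
        (Fin.snocEquiv (fun _ : Fin (k + 2) => V)) (y, w) = Fin.snoc w y := by
      intro y w; rfl
    calc ∑ y : V, ∑ w : Fin (k + 1) → V,
          nfPrefixProb Adj s0 ((Fin.snocEquiv (fun _ : Fin (k + 2) => V)) (y, w))
        = ∑ w : Fin (k + 1) → V, ∑ y : V,
            nfPrefixProb Adj s0 (Fin.snoc w y : Fin (k + 2) → V) := by
          rw [Finset.sum_comm]
          exact Finset.sum_congr rfl fun w _ => Finset.sum_congr rfl fun y _ => by rw [hsw]
      _ = ∑ w : Fin (k + 1) → V, nfPrefixProb Adj s0 w *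
            (∑ y : V, nfStepProb Adj (extFin (Fin.snoc w y : Fin (k + 2) → V)) k) := by
          refine Finset.sum_congr rfl fun w _ => ?_
          rw [Finset.mul_sum]
          exact Finset.sum_congr rfl fun y _ => prefix_snoc Adj s0 w y
      _ ≤ ∑ w : Fin (k + 1) → V, nfPrefixProb Adj s0 w := by
          refine Finset.sum_le_sum fun w _ => ?_
          exact mul_le_of_le_one_right (nfPrefixProb_nonneg Adj s0 w) (step_sum_le_one Adj w)
      _ ≤ 1 := ih

end Prob

section Final
variable {n : ℕ}

lemma nfStepProb_path_eq (v : ℕ → Fin (n + 1)) (t : ℕ) :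
    nfStepProb (pathAdj n) v t
      = if v (t + 1) ∈ stepSet v t then ((stepSet v t).card : ℝ)⁻¹ else 0 := by
  unfold nfStepProb stepSet
  congr!

lemma survival_eq_zero (hn : 1 ≤ n) (k : ℕ) (hk : n ^ 2 ≤ k) :
    nfCoverSurvival (pathAdj n) (0 : Fin (n + 1)) k = 0 := by
  unfold nfCoverSurvival
  apply Finset.sum_eq_zero
  intro w _
  by_cases hsurj : Function.Surjective w
  · rw [if_pos hsurj]
  · rw [if_neg hsurj]
    by_contra hne
    apply hsurj
    unfold nfPrefixProb at hne
    rcases mul_ne_zero_iff.mp hne with ⟨h1, h2⟩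
    have hw0 : w 0 = 0 := by
      by_contra h
      rw [if_neg h] at h1
      exact h1 rfl
    have hadm : Adm (extFin w) k := by
      intro t ht
      have hfac := Finset.prod_ne_zero_iff.mp h2 t (Finset.mem_range.mpr ht)
      by_contra hmem
      rw [nfStepProb_path_eq, if_neg hmem] at hfac
      exact hfac rfl
    have hw0' : ((extFin w) 0).val = 0 := by
      rw [extFin_eq (V := Fin (n + 1)) w 0 (Nat.zero_le k)]
      have : (⟨0, by omega⟩ : Fin (k + 1)) = 0 := rfl
      rw [this, hw0]
      rfl
    have hcov := cover hadm hw0' hk hn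
    intro m
    obtain ⟨s, hs, he⟩ := hcov m
    refine ⟨⟨s, by omega⟩, ?_⟩
    rw [← he, extFin_eq w s hs]

lemma survival_le_one (k : ℕ) :
    nfCoverSurvival (pathAdj n) (0 : Fin (n + 1)) k ≤ 1 := by
  refine le_trans ?_ (sum_prefix_le_one (pathAdj n) (0 : Fin (n + 1)) k)
  unfold nfCoverSurvival
  refine Finset.sum_le_sum fun w _ => ?_
  split
  · exact nfPrefixProb_nonneg _ _ w
  · exact le_rfl

lemma wstar_pos (hn : 1 ≤ n) :
    0 < nfPrefixProb (pathAdj n) (0 : Fin (n + 1)) (fun i : Fin (n + 1) => i) := by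
  unfold nfPrefixProb
  rw [if_pos rfl, one_mul]
  apply Finset.prod_pos
  intro t ht
  rw [Finset.mem_range] at ht
  set v : ℕ → Fin (n + 1) := extFin (fun i : Fin (n + 1) => i) with hv
  have hval : ∀ r, r ≤ n → (v r : ℕ) = r := by
    intro r hr
    rw [hv, extFin_eq _ r hr]
  have hmem : v (t + 1) ∈ stepSet v t := by
    simp only [stepSet, Finset.mem_filter, Finset.mem_univ, true_and]
    constructor
    · exact Or.inl (by rw [hval t (by omega), hval (t + 1) (by omega)])
    · intro j' _
      have hzero : transCount v t (v t) (v (t + 1)) = 0 := by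
        unfold transCount
        rw [Finset.card_eq_zero, Finset.eq_empty_iff_forall_notMem]
        intro x hx
        simp only [Finset.mem_filter, Finset.mem_range] at hx
        obtain ⟨hx1, hc1, hc2⟩ := hx
        have h1 : (v x : ℕ) = (v t : ℕ) := by rw [hc1]
        rw [hval x (by omega), hval t (by omega)] at h1
        omega
      rw [hzero]
      exact Nat.zero_le _
  rw [nfStepProb_path_eq, if_pos hmem]
  have hpos : 0 < (stepSet v t).card := Finset.card_pos.mpr ⟨v (t + 1), hmem⟩
  positivity

theorem path_negFeedback_cover_lt' (hn : 2 ≤ n) :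
    nfExpCoverTime (pathAdj n) (0 : Fin (n + 1)) < (n : ℝ) ^ 2 := by
  set q := nfPrefixProb (pathAdj n) (0 : Fin (n + 1)) (fun i : Fin (n + 1) => i) with hq_def
  have hq : 0 < q := wstar_pos (by omega)
  have hnn2 : n < n ^ 2 := by nlinarith
  have hsn : nfCoverSurvival (pathAdj n) (0 : Fin (n + 1)) n ≤ 1 - q := by
    unfold nfCoverSurvival
    rw [← Finset.add_sum_erase _ _ (Finset.mem_univ (fun i : Fin (n + 1) => i)),
      if_pos (show Function.Surjective fun i : Fin (n + 1) => i from fun a => ⟨a, rfl⟩), zero_add]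
    have hsplit : nfPrefixProb (pathAdj n) 0 (fun i : Fin (n + 1) => i)
          + ∑ w ∈ Finset.univ.erase (fun i : Fin (n + 1) => i),
            nfPrefixProb (pathAdj n) 0 w
        = ∑ w : Fin (n + 1) → Fin (n + 1), nfPrefixProb (pathAdj n) 0 w :=
      Finset.add_sum_erase _ _ (Finset.mem_univ _)
    rw [← hq_def] at hsplit
    have h1 : ∑ w : Fin (n + 1) → Fin (n + 1), nfPrefixProb (pathAdj n) 0 w ≤ 1 :=
      sum_prefix_le_one _ _ n
    refine le_trans (Finset.sum_le_sum (g := fun w => nfPrefixProb (pathAdj n) 0 w)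
      (fun w _ => ?_)) (by linarith)
    split
    · exact nfPrefixProb_nonneg _ _ w
    · exact le_rfl
  have hE : nfExpCoverTime (pathAdj n) (0 : Fin (n + 1))
      = ∑ k ∈ Finset.range (n ^ 2), nfCoverSurvival (pathAdj n) (0 : Fin (n + 1)) k := by
    unfold nfExpCoverTime
    apply tsum_eq_sum
    intro b hb
    rw [Finset.mem_range, not_lt] at hb
    exact survival_eq_zero (by omega) b hb
  rw [hE]
  calc ∑ k ∈ Finset.range (n ^ 2), nfCoverSurvival (pathAdj n) (0 : Fin (n + 1)) k
      ≤ ∑ k ∈ Finset.range (n ^ 2), (if k = n then 1 - q else 1) := by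
        refine Finset.sum_le_sum fun k _ => ?_
        by_cases hkn : k = n
        · rw [if_pos hkn, hkn]; exact hsn
        · rw [if_neg hkn]; exact survival_le_one k
    _ = (n : ℝ) ^ 2 - q := by
        have hpt : ∀ k, (if k = n then (1 : ℝ) - q else 1)
            = 1 - (if k = n then q else 0) := by intro k; split <;> ring
        rw [Finset.sum_congr rfl (fun k _ => hpt k), Finset.sum_sub_distrib,
          Finset.sum_const, Finset.sum_ite_eq' (Finset.range (n ^ 2)) n (fun _ => q),
          if_pos (Finset.mem_range.mpr hnn2)]
        simp
    _ < (n : ℝ) ^ 2 := by linarith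

end Final

/-- on the path graph `{0, 1, ..., n}` (`n ≥ 2`), the expected cover time
of the negative feedback walk started at node `0` is strictly smaller than `n²`, the
expected cover time of the simple random walk. -/
theorem path_negFeedback_cover_lt (n : ℕ) (hn : 2 ≤ n) :
    nfExpCoverTime (pathAdj n) 0 < (n : ℝ) ^ 2 :=
  path_negFeedback_cover_lt' hn
end

section
/- For any finite connected graph with $V$ nodes, maximum degree $d_{\max}$, and longest (simple) path length $\ell_{\max}$, the cover time of the negative feedback walk is deterministically bounded: $T_C \leq 1 + (V-1) \cdot d_{\max}^{\ell_{\max}}$ almost surely. -/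
open Finset
open scoped Classical

/-!
If a node `i` has been left `d_i k` times, then, since the walk always leaves `i` along a
least-used edge, the counts on the edges out of `i` differ by at most one, so every neighbour
of `i` has been entered at least `k` times. Suppose `v` is still unvisited at time
`1 + (V - 1) d_max ^ ℓ_max`. By pigeonhole some other node `u` was visited `d_max ^ ℓ_max`
times already `V - 1` steps earlier; pushing this along a path from `u` to `v` of length
`ℓ ≤ ℓ_max`, one step and one factor `d_max` per edge, forces a visit to `v` in time.
-/

noncomputable def visitCount {V : Type*} (w : ℕ → V) (t : ℕ) (i : V) : ℕ :=
  ((Finset.range t).filter (fun s => w s = i)).card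

section Counting

variable {V : Type*} (w : ℕ → V)

theorem transCount_succ (t : ℕ) (i j : V) :
    transCount w (t + 1) i j =
      transCount w t i j + if w t = i ∧ w (t + 1) = j then 1 else 0 := by
  unfold transCount
  rw [range_add_one, filter_insert]
  split
  · rw [card_insert_of_notMem (by simp)]
  · simp

theorem visitCount_pos_iff {t : ℕ} {i : V} : 0 < visitCount w t i ↔ ∃ s < t, w s = i := by
  simp [visitCount, card_pos, Finset.Nonempty]

theorem transCount_le_visitCount_succ (t : ℕ) (i j : V) :
    transCount w t i j ≤ visitCount w (t + 1) j := by
  refine card_le_card_of_injOn (· + 1) ?_ (add_left_injective 1).injOn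
  intro s hs
  simp only [coe_filter, mem_range, Set.mem_ofPred_eq] at hs ⊢
  exact ⟨by omega, hs.2.2⟩

theorem exists_lt_visitCount_of_forall_ne [Fintype V] {v : V} {N K : ℕ}
    (hN : (Fintype.card V - 1) * K < N) (hv : ∀ s < N, w s ≠ v) :
    ∃ u, K < visitCount w N u := by
  obtain ⟨u, -, hu⟩ := exists_lt_card_fiber_of_mul_lt_card_of_maps_to
    (s := range N) (t := univ.erase v) (f := w)
    (fun s hs => mem_erase.2 ⟨hv s (mem_range.1 hs), mem_univ _⟩)
    (by rwa [card_range, card_erase_of_mem (mem_univ v), card_univ])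
  exact ⟨u, hu⟩

end Counting

theorem SimpleGraph.Walk.IsPath.length_le_sSup {V : Type*} [Fintype V] {G : SimpleGraph V}
    {u v : V} {p : G.Walk u v} (hp : p.IsPath) :
    p.length ≤ sSup {n : ℕ | ∃ (u v : V) (p : G.Walk u v), p.IsPath ∧ p.length = n} :=
  le_csSup ⟨Fintype.card V, by rintro _ ⟨_, _, q, hq, rfl⟩; exact hq.length_lt.le⟩
    ⟨u, v, p, hp, rfl⟩

namespace IsNegFeedbackWalk

variable {V : Type*} {w : ℕ → V}

theorem transCount_le_transCount_add_one {Adj : V → V → Prop} (hw : IsNegFeedbackWalk Adj w)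
    (t : ℕ) (i j : V) {k : V} (hk : Adj i k) :
    transCount w t i j ≤ transCount w t i k + 1 := by
  induction t with
  | zero => simp [transCount]
  | succ t ih =>
    rw [transCount_succ, transCount_succ]
    by_cases hstep : w t = i ∧ w (t + 1) = j
    · have hmin := (hw t).2 k (hstep.1 ▸ hk)
      rw [hstep.1, hstep.2] at hmin
      rw [if_pos hstep]
      split <;> omega
    · rw [if_neg hstep]
      split <;> omega

variable {G : SimpleGraph V} [G.LocallyFinite]

theorem sum_transCount (hw : IsNegFeedbackWalk G.Adj w) (t : ℕ) (i : V) :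
    ∑ j ∈ G.neighborFinset i, transCount w t i j = visitCount w t i := by
  rw [visitCount, card_eq_sum_card_fiberwise (f := fun s => w (s + 1)) (t := G.neighborFinset i)]
  · simp only [transCount, filter_filter]
  · intro s hs
    simp only [coe_filter, mem_range, Set.mem_ofPred_eq] at hs
    simpa [← hs.2] using (hw s).1

theorem le_transCount (hw : IsNegFeedbackWalk G.Adj w) {t K : ℕ} {i j : V} (hij : G.Adj i j)
    (hvisit : G.degree i * K ≤ visitCount w t i) :
    K ≤ transCount w t i j := by
  by_contra! hlt
  have hj : j ∈ G.neighborFinset i := (G.mem_neighborFinset i j).2 hij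
  have hothers : ∑ k ∈ (G.neighborFinset i).erase j, transCount w t i k
      ≤ (G.degree i - 1) * K :=
    calc ∑ k ∈ (G.neighborFinset i).erase j, transCount w t i k
        ≤ ∑ _k ∈ (G.neighborFinset i).erase j, K := by
          refine sum_le_sum fun k _ => ?_
          have := hw.transCount_le_transCount_add_one t i k hij
          omega
      _ = (G.degree i - 1) * K := by
          rw [sum_const, card_erase_of_mem hj, G.card_neighborFinset_eq_degree, smul_eq_mul]
  have hdeg : 0 < G.degree i := (G.degree_pos_iff_exists_adj i).2 ⟨j, hij⟩
  have hsplit := hw.sum_transCount t i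
  rw [← add_sum_erase _ _ hj] at hsplit
  have : (G.degree i - 1) * K + K = G.degree i * K := by
    rw [Nat.sub_one_mul, Nat.sub_add_cancel (Nat.le_mul_of_pos_left K hdeg)]
  omega

theorem le_visitCount_succ (hw : IsNegFeedbackWalk G.Adj w) {t K : ℕ} {i j : V}
    (hij : G.Adj i j) (hvisit : G.degree i * K ≤ visitCount w t i) :
    K ≤ visitCount w (t + 1) j :=
  (hw.le_transCount hij hvisit).trans (transCount_le_visitCount_succ w t i j)

theorem le_visitCount_add_length (hw : IsNegFeedbackWalk G.Adj w) {dmax : ℕ}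
    (hdeg : ∀ x, G.degree x ≤ dmax) {u v : V} (p : G.Walk u v) {t K : ℕ}
    (hvisit : dmax ^ p.length * K ≤ visitCount w t u) :
    K ≤ visitCount w (t + p.length) v := by
  induction p generalizing t with
  | nil => simpa using hvisit
  | @cons a b c hab q ih =>
    have hb : dmax ^ q.length * K ≤ visitCount w (t + 1) b := by
      refine hw.le_visitCount_succ hab (le_trans ?_ hvisit)
      rw [SimpleGraph.Walk.length_cons, pow_succ', mul_assoc]
      exact Nat.mul_le_mul_right _ (hdeg a)
    simpa only [SimpleGraph.Walk.length_cons, Nat.add_comm q.length 1, ← Nat.add_assoc]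
      using ih hb

end IsNegFeedbackWalk

theorem negFeedback_cover_bounded_general {V : Type*} [Fintype V]
    (G : SimpleGraph V) [DecidableRel G.Adj] (hconn : G.Connected)
    (w : ℕ → V) (hw : IsNegFeedbackWalk G.Adj w)
    (dmax lmax : ℕ)
    (hd : dmax = Finset.univ.sup (fun v => G.degree v))
    (hl : lmax = sSup {n : ℕ | ∃ (u v : V) (p : G.Walk u v), p.IsPath ∧ p.length = n}) :
    ∀ v : V, ∃ t : ℕ, t ≤ 1 + (Fintype.card V - 1) * dmax ^ lmax ∧ w t = v := by
  intro v
  by_contra! hv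
  set D := dmax ^ lmax
  have hdeg : ∀ x, G.degree x ≤ dmax := fun x => hd ▸ le_sup (f := (G.degree ·)) (mem_univ x)
  have hdmax : 1 ≤ dmax := ((G.degree_pos_iff_exists_adj _).2 ⟨_, (hw 0).1⟩).trans_le (hdeg _)
  have hD : (Fintype.card V - 1) * (D - 1) + (Fintype.card V - 1) = (Fintype.card V - 1) * D := by
    rw [Nat.mul_sub_one, Nat.sub_add_cancel (Nat.le_mul_of_pos_right _ (Nat.one_le_pow _ _ hdmax))]
  obtain ⟨u, hu⟩ := exists_lt_visitCount_of_forall_ne w (K := D - 1)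
    (N := 1 + (Fintype.card V - 1) * (D - 1)) (by omega) (fun s hs => hv s (by omega))
  obtain ⟨p, hp⟩ : ∃ p : G.Walk u v, p.IsPath :=
    ⟨_, ((hconn.preconnected u v).some.toPath).2⟩
  have hpn : p.length ≤ Fintype.card V - 1 := Nat.le_sub_one_of_lt hp.length_lt
  have hvisit := hw.le_visitCount_add_length hdeg p (K := 1) <|
    calc dmax ^ p.length * 1 ≤ D := by
          simpa [D, hl] using Nat.pow_le_pow_right hdmax hp.length_le_sSup
      _ ≤ visitCount w (1 + (Fintype.card V - 1) * (D - 1)) u := by omega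
  obtain ⟨s, hs, rfl⟩ := (visitCount_pos_iff w).1 hvisit
  exact hv s (by omega) rfl

/-- on any finite connected graph with `V` nodes, maximum degree `d_max`
and longest simple path length `ℓ_max`, every negative feedback walk covers all nodes
within `1 + (V - 1) * d_max ^ ℓ_max` steps (so `T_C ≤ 1 + (V-1) d_max^{ℓ_max}` surely). -/
theorem negFeedback_cover_bounded {V : Type*} [Fintype V] [DecidableEq V]
    (G : SimpleGraph V) [DecidableRel G.Adj] (hconn : G.Connected)
    (w : ℕ → V) (hw : IsNegFeedbackWalk G.Adj w)
    (dmax lmax : ℕ)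
    (hd : dmax = Finset.univ.sup (fun v => G.degree v))
    (hl : lmax = sSup {n : ℕ | ∃ (u v : V) (p : G.Walk u v), p.IsPath ∧ p.length = n}) :
    ∀ v : V, ∃ t : ℕ, t ≤ 1 + (Fintype.card V - 1) * dmax ^ lmax ∧ w t = v :=
  negFeedback_cover_bounded_general G hconn w hw dmax lmax hd hl
end
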